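/- arXiv:2107.02502 — 5 statements merged into one kernel-verified Lean document; each statement's English description precedes it below -/
import Mathlib

section
/- Under Hypothesis 1, the matrix U = ∫₀^T r e^{rA} C e^{rAᵀ} dr is invertible (equivalently, det U > 0) for every T > 0. -/
open MeasureTheory Matrix Filter
open scoped RealInnerProductSpace

/-- The matrix exponential `e^{tA}`. -/
noncomputable def matExp {d : ℕ} (t : ℝ) (A : Matrix (Fin d) (Fin d) ℝ) :
    Matrix (Fin d) (Fin d) ℝ :=
  NormedSpace.exp (t • A)

/-- `Q_t = ∫₀ᵗ e^{sA} C e^{sAᵀ} ds`, defined entrywise. -/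
noncomputable def covQ {d : ℕ} (A C : Matrix (Fin d) (Fin d) ℝ) (t : ℝ) :
    Matrix (Fin d) (Fin d) ℝ :=
  Matrix.of fun i j => ∫ s in (0:ℝ)..t, (matExp s A * C * matExp s Aᵀ) i j

/-- `U = ∫₀ᵀ r e^{rA} C e^{rAᵀ} dr`, defined entrywise. -/
noncomputable def matU {d : ℕ} (A C : Matrix (Fin d) (Fin d) ℝ) (T : ℝ) :
    Matrix (Fin d) (Fin d) ℝ :=
  Matrix.of fun i j => ∫ r in (0:ℝ)..T, r * (matExp r A * C * matExp r Aᵀ) i j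

/-- `K(t,s) = ∫₀^{min(t,s)} e^{(t−r)A} C e^{(s−r)Aᵀ} dr`, defined entrywise. -/
noncomputable def kerK {d : ℕ} (A C : Matrix (Fin d) (Fin d) ℝ) (t s : ℝ) :
    Matrix (Fin d) (Fin d) ℝ :=
  Matrix.of fun i j => ∫ r in (0:ℝ)..(min t s), (matExp (t - r) A * C * matExp (s - r) Aᵀ) i j

/-! ### Auxiliary lemmas -/

/-- The integrand `e^{rA} C e^{rAᵀ}`. -/
noncomputable def fMat {d : ℕ} (A C : Matrix (Fin d) (Fin d) ℝ) (r : ℝ) :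
    Matrix (Fin d) (Fin d) ℝ :=
  matExp r A * C * matExp r Aᵀ

lemma matExp_cont {d : ℕ} (A : Matrix (Fin d) (Fin d) ℝ) :
    Continuous fun t : ℝ => matExp t A := by
  letI : NormedRing (Matrix (Fin d) (Fin d) ℝ) := Matrix.linftyOpNormedRing
  letI : NormedAlgebra ℝ (Matrix (Fin d) (Fin d) ℝ) := Matrix.linftyOpNormedAlgebra
  letI : NormedAlgebra ℚ (Matrix (Fin d) (Fin d) ℝ) := .restrictScalars ℚ ℝ _
  exact (NormedSpace.exp_continuous (𝔸 := Matrix (Fin d) (Fin d) ℝ)).comp (continuous_id.smul continuous_const)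

lemma matExp_transpose {d : ℕ} (t : ℝ) (A : Matrix (Fin d) (Fin d) ℝ) :
    matExp t Aᵀ = (matExp t A)ᵀ := by
  rw [matExp, matExp, ← Matrix.transpose_smul, Matrix.exp_transpose]

lemma fMat_psd {d : ℕ} {A C : Matrix (Fin d) (Fin d) ℝ} (hC : C.PosSemidef) (r : ℝ) :
    (fMat A C r).PosSemidef := by
  rw [fMat, matExp_transpose]
  simpa [Matrix.conjTranspose_eq_transpose_of_trivial] using
    hC.mul_mul_conjTranspose_same (matExp r A)

lemma fMat_cont {d : ℕ} (A C : Matrix (Fin d) (Fin d) ℝ) (i j : Fin d) :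
    Continuous fun r => fMat A C r i j :=
  (((matExp_cont A).matrix_mul continuous_const).matrix_mul (matExp_cont Aᵀ)).matrix_elem i j

lemma quad_nonneg {d : ℕ} {A C : Matrix (Fin d) (Fin d) ℝ} (hC : C.PosSemidef)
    (x : Fin d → ℝ) (r : ℝ) : 0 ≤ x ⬝ᵥ fMat A C r *ᵥ x := by
  simpa using (fMat_psd hC r).dotProduct_mulVec_nonneg x

lemma quad_cont {d : ℕ} (A C : Matrix (Fin d) (Fin d) ℝ) (x : Fin d → ℝ) :
    Continuous fun r => x ⬝ᵥ fMat A C r *ᵥ x := by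
  simp only [dotProduct, mulVec]
  exact continuous_finset_sum _ fun i _ => continuous_const.mul
    (continuous_finset_sum _ fun j _ => (fMat_cont A C i j).mul continuous_const)

lemma dot_integral {d : ℕ} (T : ℝ) (h : ℝ → Matrix (Fin d) (Fin d) ℝ)
    (hcont : ∀ i j, Continuous fun r => h r i j) (x : Fin d → ℝ) :
    x ⬝ᵥ (Matrix.of fun i j => ∫ r in (0:ℝ)..T, h r i j) *ᵥ x
      = ∫ r in (0:ℝ)..T, x ⬝ᵥ (h r) *ᵥ x := by
  simp only [mulVec, dotProduct, of_apply]
  calc ∑ i, x i * ∑ j, (∫ r in (0:ℝ)..T, h r i j) * x j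
      = ∑ i, ∫ r in (0:ℝ)..T, x i * ∑ j, h r i j * x j := by
        refine Finset.sum_congr rfl fun i _ => ?_
        have inner : ∑ j, (∫ r in (0:ℝ)..T, h r i j) * x j
            = ∫ r in (0:ℝ)..T, ∑ j, h r i j * x j := by
          simp_rw [← intervalIntegral.integral_mul_const]
          rw [← intervalIntegral.integral_finset_sum]
          exact fun j _ => ((hcont i j).mul continuous_const).intervalIntegrable _ _
        rw [inner, ← intervalIntegral.integral_const_mul]
    _ = ∫ r in (0:ℝ)..T, ∑ i, x i * ∑ j, h r i j * x j := by
        rw [← intervalIntegral.integral_finset_sum]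
        exact fun i _ => (continuous_const.mul
          (continuous_finset_sum _ fun j _ => (hcont i j).mul continuous_const)).intervalIntegrable _ _

lemma covQ_quad {d : ℕ} (A C : Matrix (Fin d) (Fin d) ℝ) (T : ℝ) (x : Fin d → ℝ) :
    x ⬝ᵥ covQ A C T *ᵥ x = ∫ r in (0:ℝ)..T, x ⬝ᵥ fMat A C r *ᵥ x :=
  dot_integral T (fMat A C) (fMat_cont A C) x

lemma matU_quad {d : ℕ} (A C : Matrix (Fin d) (Fin d) ℝ) (T : ℝ) (x : Fin d → ℝ) :
    x ⬝ᵥ matU A C T *ᵥ x = ∫ r in (0:ℝ)..T, r * (x ⬝ᵥ fMat A C r *ᵥ x) := by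
  have h1 := dot_integral T (fun r => r • fMat A C r)
    (fun i j => by
      simp only [Matrix.smul_apply, smul_eq_mul]
      exact continuous_id.mul (fMat_cont A C i j)) x
  simp only [smul_mulVec, dotProduct_smul, smul_eq_mul, Matrix.smul_apply] at h1
  exact h1

lemma fMat_symm {d : ℕ} {A C : Matrix (Fin d) (Fin d) ℝ} (hC : C.PosSemidef)
    (r : ℝ) (i j : Fin d) : fMat A C r j i = fMat A C r i j := by
  simpa using (fMat_psd hC r).1.apply i j

/-- Under Hypothesis 1 (`Q_t` invertible for all `t > 0`), the matrix
`U = ∫₀ᵀ r e^{rA} C e^{rAᵀ} dr` is invertible; equivalently, `det U > 0`. -/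
theorem U_invertible (d : ℕ) (hd : 1 ≤ d) (A C : Matrix (Fin d) (Fin d) ℝ)
    (hC : C.PosSemidef)
    (hQ : ∀ t : ℝ, 0 < t → IsUnit (covQ A C t))
    (T : ℝ) (hT : 0 < T) :
    IsUnit (matU A C T) ∧ 0 < (matU A C T).det := by
  have hQherm : (covQ A C T).IsHermitian := by
    show _ = _
    ext i j
    simp only [conjTranspose_apply, star_trivial, covQ, of_apply]
    simp_rw [show ∀ s : ℝ, (matExp s A * C * matExp s Aᵀ) j i
        = (matExp s A * C * matExp s Aᵀ) i j from fun s => fMat_symm hC s i j]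
  have hQpsd : (covQ A C T).PosSemidef := by
    refine .of_dotProduct_mulVec_nonneg hQherm fun y => ?_
    rw [star_trivial, covQ_quad]
    exact intervalIntegral.integral_nonneg hT.le fun r _ => quad_nonneg hC y r
  have key : ∀ x : Fin d → ℝ, x ≠ 0 → 0 < x ⬝ᵥ matU A C T *ᵥ x := by
    intro x hx
    have hinj := Matrix.mulVec_injective_iff_isUnit.mpr (hQ T hT)
    have hQx : covQ A C T *ᵥ x ≠ 0 := fun h0 =>
      hx (hinj (h0.trans (Matrix.mulVec_zero _).symm))
    have hne : x ⬝ᵥ covQ A C T *ᵥ x ≠ 0 := fun h0 =>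
      hQx ((hQpsd.dotProduct_mulVec_zero_iff x).mp (by simpa using h0))
    have hQpos : 0 < x ⬝ᵥ covQ A C T *ᵥ x :=
      lt_of_le_of_ne (by simpa using hQpsd.dotProduct_mulVec_nonneg x) (Ne.symm hne)
    rw [covQ_quad] at hQpos
    have hgi : IntervalIntegrable (fun r => x ⬝ᵥ fMat A C r *ᵥ x) volume 0 T :=
      (quad_cont A C x).intervalIntegrable _ _
    have h1 := (intervalIntegral.integral_pos_iff_support_of_nonneg_ae
      (Filter.Eventually.of_forall (quad_nonneg hC x)) hgi).mp hQpos
    rw [matU_quad]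
    have hae : 0 ≤ᵐ[volume.restrict (Set.uIoc (0:ℝ) T)]
        fun r => r * (x ⬝ᵥ fMat A C r *ᵥ x) := by
      rw [Set.uIoc_of_le hT.le]
      filter_upwards [ae_restrict_mem measurableSet_Ioc] with r hr
      exact mul_nonneg hr.1.le (quad_nonneg hC x r)
    refine (intervalIntegral.integral_pos_iff_support_of_nonneg_ae' hae
      ((continuous_id.mul (quad_cont A C x)).intervalIntegrable _ _)).mpr ⟨hT, ?_⟩
    refine lt_of_lt_of_le h1.2 (measure_mono ?_)
    rintro r ⟨hr1, hr2⟩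
    exact ⟨mul_ne_zero (ne_of_gt hr2.1) hr1, hr2⟩
  have hUherm : (matU A C T).IsHermitian := by
    show _ = _
    ext i j
    simp only [conjTranspose_apply, star_trivial, matU, of_apply]
    simp_rw [show ∀ s : ℝ, (matExp s A * C * matExp s Aᵀ) j i
        = (matExp s A * C * matExp s Aᵀ) i j from fun s => fMat_symm hC s i j]
  have hUpd : (matU A C T).PosDef := .of_dotProduct_mulVec_pos hUherm fun x hx => by simpa using key x hx
  have hdet : 0 < (matU A C T).det := hUpd.det_pos
  exact ⟨(Matrix.isUnit_iff_isUnit_det _).mpr (isUnit_iff_ne_zero.mpr hdet.ne'), hdet⟩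
end

section
/- For every T > 0, one has U ⪰ (T/2) · e^{(T/2)A} Q_{T/2} e^{(T/2)Aᵀ} in the Loewner order (the difference is positive semidefinite), and consequently det U ≥ (T/2)^d · e^{T·tr(A)} · det Q_{T/2}. -/
open MeasureTheory Matrix Filter
open scoped RealInnerProductSpace

namespace MyAux

variable {d : ℕ}

/-! ### Basic facts about `matExp` -/

lemma matExp_zero (A : Matrix (Fin d) (Fin d) ℝ) : matExp 0 A = 1 := by
  simp [matExp, NormedSpace.exp_zero]

lemma matExp_add (A : Matrix (Fin d) (Fin d) ℝ) (s t : ℝ) :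
    matExp (s + t) A = matExp s A * matExp t A := by
  rw [matExp, add_smul]
  exact Matrix.exp_add_of_commute _ _ (((Commute.refl A).smul_left s).smul_right t)

lemma matExp_transpose (A : Matrix (Fin d) (Fin d) ℝ) (t : ℝ) :
    matExp t Aᵀ = (matExp t A)ᵀ := by
  rw [matExp, ← Matrix.transpose_smul, Matrix.exp_transpose, matExp]

lemma ctr (M : Matrix (Fin d) (Fin d) ℝ) : Mᴴ = Mᵀ := by
  ext i j
  simp [Matrix.conjTranspose_apply]

lemma hasDerivAt_matExp_entry (A : Matrix (Fin d) (Fin d) ℝ) (t : ℝ) (i j : Fin d) :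
    HasDerivAt (fun u => matExp u A i j) ((A * matExp t A) i j) t := by
  letI : SeminormedRing (Matrix (Fin d) (Fin d) ℝ) := Matrix.linftyOpSemiNormedRing
  letI : NormedRing (Matrix (Fin d) (Fin d) ℝ) := Matrix.linftyOpNormedRing
  letI : NormedAlgebra ℝ (Matrix (Fin d) (Fin d) ℝ) := Matrix.linftyOpNormedAlgebra
  have h : HasDerivAt (fun u : ℝ => NormedSpace.exp (u • A))
      (A * NormedSpace.exp (t • A)) t := hasDerivAt_exp_smul_const' A t
  let e : Matrix (Fin d) (Fin d) ℝ →ₗ[ℝ] ℝ :=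
    { toFun := fun M => M i j
      map_add' := fun _ _ => rfl
      map_smul' := fun _ _ => rfl }
  exact (e.toContinuousLinearMap.hasFDerivAt.comp_hasDerivAt t h)

lemma continuous_matExp_entry (A : Matrix (Fin d) (Fin d) ℝ) (i j : Fin d) :
    Continuous fun u => matExp u A i j :=
  continuous_iff_continuousAt.2 fun t => (hasDerivAt_matExp_entry A t i j).continuousAt

/-! ### `det (matExp t A) = exp (t * trace A)` -/

lemma hasDerivAt_det_matExp_zero (A : Matrix (Fin d) (Fin d) ℝ) :
    HasDerivAt (fun t => (matExp t A).det) A.trace 0 := by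
  have key : ∀ σ : Equiv.Perm (Fin d),
      HasDerivAt (fun t => ∏ i, matExp t A (σ i) i)
        (if σ = 1 then A.trace else 0) 0 := by
    intro σ
    have h1 : HasDerivAt (fun t => ∏ i : Fin d, matExp t A (σ i) i)
        (∑ i : Fin d, (∏ j ∈ Finset.univ.erase i, matExp 0 A (σ j) j) • (A * matExp 0 A) (σ i) i)
        0 :=
      HasDerivAt.fun_finsetProd (fun i _ => hasDerivAt_matExp_entry A 0 (σ i) i)
    convert h1 using 1
    rw [matExp_zero, mul_one]
    by_cases hσ : σ = 1
    · subst hσ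
      simp [Matrix.one_apply, Matrix.trace, Matrix.diag]
    · rw [if_neg hσ, eq_comm]
      refine Finset.sum_eq_zero fun i _ => ?_
      have : ∃ j, j ≠ i ∧ σ j ≠ j := by
        by_contra hcon
        push_neg at hcon
        apply hσ
        apply Equiv.ext
        intro k
        rw [Equiv.Perm.one_apply]
        by_cases hk : k = i
        · subst hk
          by_contra hki
          have h3 : σ (σ k) = σ k := hcon (σ k) hki
          exact hki (σ.injective h3)
        · exact hcon k hk
      obtain ⟨j, hji, hjσ⟩ := this
      have hz : (1 : Matrix (Fin d) (Fin d) ℝ) (σ j) j = 0 := Matrix.one_apply_ne hjσ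
      have hp : (∏ k ∈ Finset.univ.erase i, (1 : Matrix (Fin d) (Fin d) ℝ) (σ k) k) = 0 :=
        Finset.prod_eq_zero (Finset.mem_erase.2 ⟨hji, Finset.mem_univ j⟩) hz
      rw [hp, zero_smul]
  have hsum := HasDerivAt.fun_sum
    (fun σ (_ : σ ∈ (Finset.univ : Finset (Equiv.Perm (Fin d)))) =>
      ((key σ).const_smul ((Equiv.Perm.sign σ : ℤ))))
  convert hsum using 1
  · rfl
  · rfl
  · funext t
    rw [Matrix.det_apply]
    exact Finset.sum_congr rfl fun σ _ => by rw [Units.smul_def]; rfl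
  · rw [Finset.sum_eq_single (1 : Equiv.Perm (Fin d))]
    · simp
    · intro σ _ hσ; simp [hσ]
    · simp

lemma hasDerivAt_det_matExp (A : Matrix (Fin d) (Fin d) ℝ) (t₀ : ℝ) :
    HasDerivAt (fun t => (matExp t A).det) ((matExp t₀ A).det * A.trace) t₀ := by
  have h1 : HasDerivAt (fun h => (matExp (t₀ + h) A).det) ((matExp t₀ A).det * A.trace) 0 := by
    have : (fun h => (matExp (t₀ + h) A).det)
        = fun h => (matExp t₀ A).det * (matExp h A).det := by
      funext h; rw [matExp_add, Matrix.det_mul]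
    rw [this]
    exact (hasDerivAt_det_matExp_zero A).const_mul _
  have h2 := HasDerivAt.comp_sub_const (f := fun h => (matExp (t₀ + h) A).det)
    (f' := (matExp t₀ A).det * A.trace) t₀ t₀ (by simpa using h1)
  have heq : (fun t : ℝ => (matExp (t₀ + (t - t₀)) A).det) = fun t => (matExp t A).det := by
    funext t
    rw [show t₀ + (t - t₀) = t by ring]
  rwa [heq] at h2

lemma det_matExp (A : Matrix (Fin d) (Fin d) ℝ) (t : ℝ) :
    (matExp t A).det = Real.exp (t * A.trace) := by
  have key : ∀ u : ℝ, (matExp u A).det * Real.exp (-(u * A.trace)) = 1 := by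
    have hder : ∀ u : ℝ,
        HasDerivAt (fun v => (matExp v A).det * Real.exp (-(v * A.trace))) 0 u := by
      intro u
      have h1 := hasDerivAt_det_matExp A u
      have h2 : HasDerivAt (fun v : ℝ => Real.exp (-(v * A.trace)))
          (Real.exp (-(u * A.trace)) * (-A.trace)) u := by
        have : HasDerivAt (fun v : ℝ => -(v * A.trace)) (-A.trace) u := by
          simpa [Pi.neg_def] using ((hasDerivAt_id u).mul_const A.trace).neg
        simpa [Function.comp_def] using (Real.hasDerivAt_exp _).comp u this
      have := h1.mul h2
      exact this.congr_deriv (by ring)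
    have hconst : ∀ u : ℝ, (matExp u A).det * Real.exp (-(u * A.trace))
        = (matExp 0 A).det * Real.exp (-(0 * A.trace)) := by
      intro u
      exact is_const_of_deriv_eq_zero
        (fun v => (hder v).differentiableAt)
        (fun v => (hder v).deriv) u 0
    intro u
    rw [hconst u, matExp_zero]
    simp
  have h3 := key t
  rwa [Real.exp_neg, mul_inv_eq_one₀ (Real.exp_ne_zero _)] at h3

/-! ### Determinant monotonicity in the Loewner order -/

lemma psd_det_nonneg {M : Matrix (Fin d) (Fin d) ℝ} (hM : M.PosSemidef) : 0 ≤ M.det := by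
  rw [hM.isHermitian.det_eq_prod_eigenvalues]
  exact Finset.prod_nonneg fun i _ => by
    simpa using hM.eigenvalues_nonneg i

lemma det_one_add_psd {Q : Matrix (Fin d) (Fin d) ℝ} (hQ : Q.PosSemidef) :
    1 ≤ (1 + Q).det := by
  classical
  have hH := hQ.isHermitian
  set V : Matrix (Fin d) (Fin d) ℝ := (hH.eigenvectorUnitary : Matrix (Fin d) (Fin d) ℝ) with hV
  have hVU : V * star V = 1 := (Matrix.mem_unitaryGroup_iff).mp hH.eigenvectorUnitary.2
  have hspec := hH.spectral_theorem
  have hdecomp : 1 + Q = V * (1 + diagonal (RCLike.ofReal ∘ hH.eigenvalues)) * star V := by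
    rw [mul_add, add_mul, mul_one, hVU]
    conv_lhs => rw [hspec]
    rfl
  have hVU' : star V * V = 1 := (Matrix.mem_unitaryGroup_iff').mp hH.eigenvectorUnitary.2
  rw [hdecomp, Matrix.det_mul, Matrix.det_mul, mul_comm, ← mul_assoc, ← Matrix.det_mul,
    hVU', Matrix.det_one, one_mul]
  have h1 : (1 : Matrix (Fin d) (Fin d) ℝ) + diagonal (RCLike.ofReal ∘ hH.eigenvalues)
      = diagonal (fun i => 1 + hH.eigenvalues i) := by
    rw [← Matrix.diagonal_one, Matrix.diagonal_add]
    congr 1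
  rw [h1, Matrix.det_diagonal]
  calc (1:ℝ) = ∏ _i : Fin d, 1 := by simp
    _ ≤ ∏ i, (1 + hH.eigenvalues i) :=
      Finset.prod_le_prod (fun i _ => zero_le_one)
        (fun i _ => by have := hQ.eigenvalues_nonneg i; linarith)

open scoped MatrixOrder in
lemma det_le_det_add_psd {M P : Matrix (Fin d) (Fin d) ℝ} (hM : M.PosSemidef)
    (hP : P.PosSemidef) : M.det ≤ (M + P).det := by
  classical
  by_cases hdet : M.det = 0
  · rw [hdet]
    exact psd_det_nonneg (hM.add hP)
  · have hS : (CFC.sqrt M).PosSemidef := (CFC.sqrt_nonneg M).posSemidef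
    set S := CFC.sqrt M with hSdef
    have hSS : S * S = M := CFC.sqrt_mul_sqrt_self M hM.nonneg
    have hdetS : IsUnit S.det := by
      rw [isUnit_iff_ne_zero]
      intro h0
      apply hdet
      rw [← hSS, Matrix.det_mul, h0, zero_mul]
    have hSH : Sᴴ = S := hS.isHermitian
    have hSinvH : (S⁻¹)ᴴ = S⁻¹ := by rw [Matrix.conjTranspose_nonsing_inv, hSH]
    have hQ' : (S⁻¹ * P * S⁻¹).PosSemidef := by
      have := hP.mul_mul_conjTranspose_same S⁻¹
      rwa [hSinvH] at this
    have hrw : S * (S⁻¹ * P * S⁻¹) * S = P := by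
      rw [← mul_assoc S (S⁻¹ * P) S⁻¹, ← mul_assoc S S⁻¹ P,
        Matrix.mul_nonsing_inv _ hdetS, one_mul, mul_assoc P S⁻¹ S,
        Matrix.nonsing_inv_mul _ hdetS, mul_one]
    have hdecomp : M + P = S * (1 + S⁻¹ * P * S⁻¹) * S := by
      rw [mul_add, mul_one, add_mul, hSS, hrw]
    have hMdetpos : 0 < M.det := lt_of_le_of_ne (psd_det_nonneg hM) (Ne.symm hdet)
    rw [hdecomp, Matrix.det_mul, Matrix.det_mul]
    have h1 : S.det * S.det = M.det := by rw [← Matrix.det_mul, hSS]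
    calc M.det = M.det * 1 := (mul_one _).symm
      _ ≤ M.det * (1 + S⁻¹ * P * S⁻¹).det :=
          mul_le_mul_of_nonneg_left (det_one_add_psd hQ') hMdetpos.le
      _ = S.det * (1 + S⁻¹ * P * S⁻¹).det * S.det := by rw [← h1]; ring

/-! ### Quadratic forms and entrywise integrals -/

variable (A C : Matrix (Fin d) (Fin d) ℝ)

lemma continuous_f_entry (i j : Fin d) :
    Continuous fun s => (matExp s A * C * matExp s Aᵀ) i j := by
  simp only [Matrix.mul_apply]
  refine continuous_finset_sum _ fun k _ => Continuous.mul ?_ (continuous_matExp_entry Aᵀ k j)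
  exact continuous_finset_sum _ fun l _ =>
    (continuous_matExp_entry A i l).mul continuous_const

lemma f_psd (hC : C.PosSemidef) (r : ℝ) :
    (matExp r A * C * matExp r Aᵀ).PosSemidef := by
  have h : matExp r Aᵀ = (matExp r A)ᴴ := by rw [matExp_transpose, ctr]
  rw [h]
  exact hC.mul_mul_conjTranspose_same _

lemma herm_smul {M : Matrix (Fin d) (Fin d) ℝ} (h : M.IsHermitian) (c : ℝ) :
    (c • M).IsHermitian := by
  show (c • M)ᴴ = c • M
  rw [Matrix.conjTranspose_smul, h.eq]
  simp

lemma herm_entry {M : Matrix (Fin d) (Fin d) ℝ} (h : M.IsHermitian) (i j : Fin d) :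
    M i j = M j i := by
  conv_lhs => rw [← h]
  simp [Matrix.conjTranspose_apply]

lemma quad_conj (M B : Matrix (Fin d) (Fin d) ℝ) (x : Fin d → ℝ) :
    x ⬝ᵥ ((B * M * Bᵀ) *ᵥ x) = (Bᵀ *ᵥ x) ⬝ᵥ (M *ᵥ (Bᵀ *ᵥ x)) := by
  rw [← Matrix.mulVec_mulVec, ← Matrix.mulVec_mulVec, Matrix.dotProduct_mulVec,
    ← Matrix.mulVec_transpose]

lemma conj_f (a r : ℝ) :
    matExp a A * (matExp r A * C * matExp r Aᵀ) * (matExp a A)ᵀ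
      = matExp (r + a) A * C * matExp (r + a) Aᵀ := by
  have hBE : matExp a A * matExp r A = matExp (r + a) A := by
    rw [← matExp_add, add_comm]
  have hET : matExp r Aᵀ * (matExp a A)ᵀ = matExp (r + a) Aᵀ := by
    rw [matExp_transpose, matExp_transpose, ← Matrix.transpose_mul, hBE]
  calc matExp a A * (matExp r A * C * matExp r Aᵀ) * (matExp a A)ᵀ
      = (matExp a A * matExp r A) * C * (matExp r Aᵀ * (matExp a A)ᵀ) := by
        simp only [mul_assoc]
    _ = matExp (r + a) A * C * matExp (r + a) Aᵀ := by rw [hBE, hET]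

lemma dot_integral (a b : ℝ) (F : ℝ → Matrix (Fin d) (Fin d) ℝ)
    (hF : ∀ i j, Continuous fun s => F s i j) (x : Fin d → ℝ) :
    x ⬝ᵥ ((Matrix.of fun i j => ∫ s in a..b, F s i j) *ᵥ x)
      = ∫ s in a..b, x ⬝ᵥ (F s *ᵥ x) := by
  simp only [dotProduct, Matrix.mulVec, Matrix.of_apply]
  have e1 : (fun s => ∑ i, x i * ∑ j, F s i j * x j)
      = fun s => ∑ i, ∑ j, x i * (F s i j * x j) := by
    funext s
    exact Finset.sum_congr rfl fun i _ => Finset.mul_sum _ _ _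
  rw [e1, intervalIntegral.integral_finset_sum (fun i _ =>
    ((continuous_finset_sum _ fun j _ =>
      (continuous_const.fun_mul ((hF i j).fun_mul continuous_const))).intervalIntegrable a b))]
  refine Finset.sum_congr rfl fun i _ => ?_
  rw [intervalIntegral.integral_finset_sum (fun j _ =>
    (continuous_const.fun_mul ((hF i j).fun_mul continuous_const)).intervalIntegrable a b)]
  rw [Finset.mul_sum]
  refine Finset.sum_congr rfl fun j _ => ?_
  rw [intervalIntegral.integral_const_mul, intervalIntegral.integral_mul_const]

end MyAux

open MyAux in
/-- `U ⪰ (T/2) e^{(T/2)A} Q_{T/2} e^{(T/2)Aᵀ}` in the Loewner order, and consequently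
`det U ≥ (T/2)^d e^{T·tr A} det Q_{T/2}`. -/
theorem U_loewner_lower_bound (d : ℕ) (hd : 1 ≤ d) (A C : Matrix (Fin d) (Fin d) ℝ)
    (hC : C.PosSemidef) (T : ℝ) (hT : 0 < T) :
    (matU A C T - (T / 2) • (matExp (T / 2) A * covQ A C (T / 2) * matExp (T / 2) Aᵀ)).PosSemidef ∧
    (T / 2) ^ d * Real.exp (T * A.trace) * (covQ A C (T / 2)).det ≤ (matU A C T).det := by
  classical
  rw [matExp_transpose A (T / 2)]
  set f : ℝ → Matrix (Fin d) (Fin d) ℝ := fun r => matExp r A * C * matExp r Aᵀ with hf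
  set B : Matrix (Fin d) (Fin d) ℝ := matExp (T / 2) A with hB
  -- symmetry of f r
  have hfsymm : ∀ (r : ℝ) (i j : Fin d),
      (matExp r A * C * matExp r Aᵀ) i j = (matExp r A * C * matExp r Aᵀ) j i := fun r i j =>
    herm_entry (f_psd A C hC r).isHermitian i j
  -- quadratic forms
  have hgcont : ∀ x : Fin d → ℝ, Continuous fun r => x ⬝ᵥ (f r *ᵥ x) := by
    intro x
    simp only [dotProduct, Matrix.mulVec]
    exact continuous_finset_sum _ fun i _ => continuous_const.mul (continuous_finset_sum _
      fun j _ => ((continuous_f_entry A C i j).mul continuous_const))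
  have hgnn : ∀ (x : Fin d → ℝ) r, 0 ≤ x ⬝ᵥ (f r *ᵥ x) := by
    intro x r
    simpa using (f_psd A C hC r).dotProduct_mulVec_nonneg x
  -- quadratic form of covQ
  have hQform : ∀ (y : Fin d → ℝ), y ⬝ᵥ (covQ A C (T / 2) *ᵥ y)
      = ∫ s in (0:ℝ)..(T / 2), y ⬝ᵥ (f s *ᵥ y) := fun y =>
    dot_integral 0 (T / 2) f (fun i j => continuous_f_entry A C i j) y
  -- quadratic form of matU
  have hUform : ∀ (x : Fin d → ℝ), x ⬝ᵥ (matU A C T *ᵥ x)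
      = ∫ r in (0:ℝ)..T, r * (x ⬝ᵥ (f r *ᵥ x)) := by
    intro x
    have hmatU : matU A C T = Matrix.of fun i j => ∫ r in (0:ℝ)..T, (r • f r) i j := by
      ext i j
      simp [matU, Matrix.smul_apply, smul_eq_mul, hf]
    rw [hmatU, dot_integral 0 T (fun r => r • f r)
      (fun i j => by
        simp only [Matrix.smul_apply, smul_eq_mul]
        exact continuous_id'.mul (continuous_f_entry A C i j)) x]
    refine intervalIntegral.integral_congr fun r _ => ?_
    rw [Matrix.smul_mulVec, dotProduct_smul, smul_eq_mul]
  -- quadratic form of the conjugated covariance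
  have hMform : ∀ (x : Fin d → ℝ), x ⬝ᵥ ((B * covQ A C (T / 2) * Bᵀ) *ᵥ x)
      = ∫ s in (0:ℝ)..(T / 2), x ⬝ᵥ (f (s + T / 2) *ᵥ x) := by
    intro x
    rw [quad_conj, hQform]
    refine intervalIntegral.integral_congr fun s _ => ?_
    rw [← quad_conj]
    simp only [hf, hB]
    rw [conj_f A C (T / 2) s]
  -- the scalar inequality
  have hineq : ∀ x : Fin d → ℝ,
      (T / 2) * ∫ s in (0:ℝ)..(T / 2), x ⬝ᵥ (f (s + T / 2) *ᵥ x)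
        ≤ ∫ r in (0:ℝ)..T, r * (x ⬝ᵥ (f r *ᵥ x)) := by
    intro x
    set g : ℝ → ℝ := fun r => x ⬝ᵥ (f r *ᵥ x) with hg
    have hcg : Continuous g := hgcont x
    have hint : Continuous fun r : ℝ => r * g r := continuous_id'.mul hcg
    have h1 : (∫ s in (0:ℝ)..(T / 2), g (s + T / 2)) = ∫ r in (T / 2)..T, g r := by
      rw [intervalIntegral.integral_comp_add_right]
      norm_num
    have h2 : (T / 2) * ∫ r in (T / 2)..T, g r ≤ ∫ r in (T / 2)..T, r * g r := by
      rw [← intervalIntegral.integral_const_mul]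
      refine intervalIntegral.integral_mono_on (by linarith)
        ((continuous_const.mul hcg).intervalIntegrable _ _)
        (hint.intervalIntegrable _ _) ?_
      intro r hr
      rcases hr with ⟨hr1, _⟩
      exact mul_le_mul_of_nonneg_right hr1 (hgnn x r)
    have h3 : (0:ℝ) ≤ ∫ r in (0:ℝ)..(T / 2), r * g r := by
      refine intervalIntegral.integral_nonneg (by linarith) ?_
      intro r hr
      exact mul_nonneg hr.1 (hgnn x r)
    have h4 : (∫ r in (0:ℝ)..T, r * g r)
        = (∫ r in (0:ℝ)..(T / 2), r * g r) + ∫ r in (T / 2)..T, r * g r := by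
      exact (intervalIntegral.integral_add_adjacent_intervals
        (hint.intervalIntegrable _ _) (hint.intervalIntegrable _ _)).symm
    rw [h1, h4]
    linarith
  -- Positive semidefiniteness of the difference
  have hQsymm : (covQ A C (T / 2)).IsHermitian := by
    rw [Matrix.IsHermitian, ctr]
    ext i j
    simp only [Matrix.transpose_apply, covQ, Matrix.of_apply]
    exact intervalIntegral.integral_congr fun s _ => hfsymm s j i
  have hUsymm : (matU A C T).IsHermitian := by
    rw [Matrix.IsHermitian, ctr]
    ext i j
    simp only [Matrix.transpose_apply, matU, Matrix.of_apply]
    exact intervalIntegral.integral_congr fun s _ => by rw [hfsymm s i j]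
  have hDherm : (matU A C T - (T / 2) • (B * covQ A C (T / 2) * Bᵀ)).IsHermitian := by
    refine hUsymm.sub ?_
    have h := (Matrix.isHermitian_mul_mul_conjTranspose B hQsymm)
    rw [ctr] at h
    exact herm_smul h _
  have hDpsd : (matU A C T - (T / 2) • (B * covQ A C (T / 2) * Bᵀ)).PosSemidef := by
    refine Matrix.PosSemidef.of_dotProduct_mulVec_nonneg hDherm fun x => ?_
    have hx : star x = x := by
      funext i; simp
    rw [hx, Matrix.sub_mulVec, dotProduct_sub, Matrix.smul_mulVec,
      dotProduct_smul, smul_eq_mul, hUform x, hMform x, sub_nonneg]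
    exact hineq x
  refine ⟨hDpsd, ?_⟩
  -- determinant inequality
  have hQpsd : (covQ A C (T / 2)).PosSemidef := by
    refine Matrix.PosSemidef.of_dotProduct_mulVec_nonneg hQsymm fun y => ?_
    have hy : star y = y := by funext i; simp
    rw [hy, hQform y]
    exact intervalIntegral.integral_nonneg (by linarith) fun s _ => hgnn y s
  have hMpsd : ((T / 2) • (B * covQ A C (T / 2) * Bᵀ)).PosSemidef := by
    have h1 : (B * covQ A C (T / 2) * Bᵀ).PosSemidef := by
      have := hQpsd.mul_mul_conjTranspose_same B
      rwa [ctr] at this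
    refine Matrix.PosSemidef.of_dotProduct_mulVec_nonneg (herm_smul h1.isHermitian _) fun x => ?_
    rw [Matrix.smul_mulVec, dotProduct_smul, smul_eq_mul]
    exact mul_nonneg (by linarith) (h1.dotProduct_mulVec_nonneg x)
  have hdet1 : ((T / 2) • (B * covQ A C (T / 2) * Bᵀ)).det ≤ (matU A C T).det := by
    have := det_le_det_add_psd hMpsd hDpsd
    rwa [add_sub_cancel] at this
  have hdet2 : ((T / 2) • (B * covQ A C (T / 2) * Bᵀ)).det
      = (T / 2) ^ d * Real.exp (T * A.trace) * (covQ A C (T / 2)).det := by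
    rw [Matrix.det_smul, Matrix.det_mul, Matrix.det_mul, Matrix.det_transpose]
    have hBB : B.det * B.det = Real.exp (T * A.trace) := by
      rw [hB, ← Matrix.det_mul, ← matExp_add, show T / 2 + T / 2 = T by ring, det_matExp]
    rw [Fintype.card_fin]
    calc (T / 2) ^ d * (B.det * (covQ A C (T / 2)).det * B.det)
        = (T / 2) ^ d * ((B.det * B.det) * (covQ A C (T / 2)).det) := by ring
      _ = (T / 2) ^ d * Real.exp (T * A.trace) * (covQ A C (T / 2)).det := by rw [hBB]; ring
  -- conclude
  have hgoal : (T / 2) ^ d * Real.exp (T * A.trace) * (covQ A C (T / 2)).det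
      ≤ (matU A C T).det := by rw [← hdet2]; exact hdet1
  -- rewrite B back
  exact hgoal
end

section
/- For every continuous h : [0,T] → ℝ^d and every t ∈ [0,T], one has ∫₀^t e^{(t−s)A} √C ( ∫_s^T √C e^{(r−s)Aᵀ} h(r) dr ) ds = ∫₀^T K(t,r) h(r) dr; that is, the operator with kernel K factors as 𝕃_T 𝕃_T* where 𝕃_T h(t) = ∫₀^t e^{(t−s)A} √C h(s) ds. -/
open MeasureTheory Matrix Filter
open scoped RealInnerProductSpace

/-- The positive semidefinite square root of a positive semidefinite matrix
(the definition removed from Mathlib, restated with its old meaning). -/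
noncomputable def Matrix.PosSemidef.sqrt {n : Type*} [Fintype n] [DecidableEq n]
    {A : Matrix n n ℝ} (hA : A.PosSemidef) : Matrix n n ℝ :=
  hA.1.eigenvectorUnitary.1 * diagonal ((↑) ∘ Real.sqrt ∘ hA.1.eigenvalues) *
    (star hA.1.eigenvectorUnitary : Matrix n n ℝ)

lemma Matrix.PosSemidef.sqrt_mul_self {n : Type*} [Fintype n] [DecidableEq n]
    {A : Matrix n n ℝ} (hA : A.PosSemidef) : hA.sqrt * hA.sqrt = A := by
  set U := hA.1.eigenvectorUnitary with hUdef
  have hU : (star U : Matrix n n ℝ) * (U : Matrix n n ℝ) = 1 := by simp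
  conv_rhs => rw [hA.1.spectral_theorem, Unitary.conjStarAlgAut_apply]
  unfold Matrix.PosSemidef.sqrt
  rw [← hUdef]
  calc _ = (U : Matrix n n ℝ) * (diagonal ((↑) ∘ Real.sqrt ∘ hA.1.eigenvalues)
        * ((star U : Matrix n n ℝ) * (U : Matrix n n ℝ)) * diagonal ((↑) ∘ Real.sqrt ∘ hA.1.eigenvalues))
        * (star U : Matrix n n ℝ) := by simp only [mul_assoc]
    _ = _ := by
      rw [hU, mul_one, diagonal_mul_diagonal]
      congr 3
      funext i
      simp [Real.mul_self_sqrt (hA.eigenvalues_nonneg i)]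

section aux

attribute [local instance] Matrix.linftyOpNormedRing Matrix.linftyOpNormedAlgebra

lemma continuous_matExp {d : ℕ} (A : Matrix (Fin d) (Fin d) ℝ) :
    Continuous fun s : ℝ => matExp s A :=
  NormedSpace.exp_continuous.comp (continuous_id.smul continuous_const)

end aux

set_option maxHeartbeats 1000000

/-- The factorization `𝕃_T 𝕃_T* = (kernel operator with kernel K)`: for continuous
`h : [0,T] → ℝ^d` and `t ∈ [0,T]`,
`∫₀ᵗ e^{(t−s)A} √C (∫ₛᵀ √C e^{(r−s)Aᵀ} h(r) dr) ds = ∫₀ᵀ K(t,r) h(r) dr`. -/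
theorem LLstar_eq_K (d : ℕ) (hd : 1 ≤ d) (A C : Matrix (Fin d) (Fin d) ℝ)
    (hC : C.PosSemidef) (T : ℝ) (hT : 0 < T)
    (h : ℝ → Fin d → ℝ) (hh : ContinuousOn h (Set.Icc 0 T))
    (t : ℝ) (ht : t ∈ Set.Icc (0:ℝ) T) :
    (∫ s in (0:ℝ)..t,
        (matExp (t - s) A * hC.sqrt).mulVec
          (∫ r in s..T, (hC.sqrt * matExp (r - s) Aᵀ).mulVec (h r)))
      = ∫ r in (0:ℝ)..T, (kerK A C t r).mulVec (h r) := by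
  obtain ⟨ht0, htT⟩ := ht
  have hT0 : (0:ℝ) ≤ T := hT.le
  set F : ℝ → ℝ → Fin d → ℝ :=
    fun s r => (matExp (t - s) A * C * matExp (r - s) Aᵀ).mulVec (h r) with hFdef
  have hMcont : Continuous (fun p : ℝ × ℝ => matExp (t - p.1) A * C * matExp (p.2 - p.1) Aᵀ) :=
    (((continuous_matExp A).comp (continuous_const.sub continuous_fst)).matrix_mul
        continuous_const).matrix_mul
      ((continuous_matExp Aᵀ).comp (continuous_snd.sub continuous_fst))
  have hmulVec : Continuous
      (fun q : Matrix (Fin d) (Fin d) ℝ × (Fin d → ℝ) => q.1.mulVec q.2) :=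
    continuous_fst.matrix_mulVec continuous_snd
  have hFcont : ContinuousOn (fun p : ℝ × ℝ => F p.1 p.2) (Set.univ ×ˢ Set.Icc 0 T) :=
    hmulVec.comp_continuousOn
      (hMcont.continuousOn.prodMk (hh.comp continuous_snd.continuousOn fun p hp => hp.2))
  have hFs : ∀ r : ℝ, Continuous fun s => F s r := fun r =>
    ((((continuous_matExp A).comp (continuous_const.sub continuous_id)).matrix_mul
        continuous_const).matrix_mul
      ((continuous_matExp Aᵀ).comp (continuous_const.sub continuous_id))).matrix_mulVec
      continuous_const
  -- Step A: rewrite the LHS integrand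
  have stepA : ∀ s ∈ Set.uIcc (0:ℝ) t,
      (matExp (t - s) A * hC.sqrt).mulVec
        (∫ r in s..T, (hC.sqrt * matExp (r - s) Aᵀ).mulVec (h r))
      = ∫ r in s..T, F s r := by
    intro s hs
    rw [Set.uIcc_of_le ht0] at hs
    have hsT : Set.uIcc s T ⊆ Set.Icc 0 T := by
      rw [Set.uIcc_of_le (hs.2.trans htT)]
      exact Set.Icc_subset_Icc hs.1 le_rfl
    have hint : IntervalIntegrable
        (fun r => (hC.sqrt * matExp (r - s) Aᵀ).mulVec (h r)) volume s T := by
      apply ContinuousOn.intervalIntegrable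
      have : ContinuousOn (fun r => (hC.sqrt * matExp (r - s) Aᵀ).mulVec (h r))
          (Set.Icc 0 T) :=
        hmulVec.comp_continuousOn ((Continuous.continuousOn (continuous_const.matrix_mul
          ((continuous_matExp Aᵀ).comp (continuous_id.sub continuous_const)))).prodMk hh)
      exact this.mono hsT
    have key := (LinearMap.toContinuousLinearMap
        ((matExp (t - s) A * hC.sqrt).mulVecLin)).intervalIntegral_comp_comm hint
    simp only [LinearMap.coe_toContinuousLinearMap', Matrix.mulVecLin_apply] at key
    rw [← key]
    refine intervalIntegral.integral_congr fun r hr => ?_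
    rw [Matrix.mulVec_mulVec]
    rw [mul_assoc, ← mul_assoc hC.sqrt, hC.sqrt_mul_self, ← mul_assoc]
  -- Step C: identify the kernel
  have stepC : ∀ r ∈ Set.Icc (0:ℝ) T,
      (∫ s in (0:ℝ)..(min t r), F s r) = (kerK A C t r).mulVec (h r) := by
    intro r hr
    have hm : (0:ℝ) ≤ min t r := le_min ht0 hr.1
    funext i
    have h1 := (ContinuousLinearMap.proj (R := ℝ) (φ := fun _ : Fin d => ℝ)
        i).intervalIntegral_comp_comm ((hFs r).intervalIntegrable (μ := volume) 0 (min t r))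
    simp only [ContinuousLinearMap.proj_apply] at h1
    rw [← h1]
    have h2 : ∀ s, F s r i
        = ∑ j, (matExp (t - s) A * C * matExp (r - s) Aᵀ) i j * h r j := by
      intro s
      simp [hFdef, Matrix.mulVec, dotProduct]
    simp_rw [h2]
    rw [intervalIntegral.integral_finset_sum]
    · simp only [kerK, Matrix.mulVec, dotProduct, Matrix.of_apply]
      exact Finset.sum_congr rfl fun j _ => intervalIntegral.integral_mul_const _ _
    · intro j _
      exact (((((continuous_matExp A).comp (continuous_const.sub continuous_id)).matrix_mul
          continuous_const).matrix_mul
        ((continuous_matExp Aᵀ).comp (continuous_const.sub continuous_id))).matrix_elem i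
          j).mul continuous_const |>.intervalIntegrable _ _
  -- Step B: Fubini
  have fubini : (∫ s in (0:ℝ)..t, ∫ r in s..T, F s r)
      = ∫ r in (0:ℝ)..T, ∫ s in (0:ℝ)..(min t r), F s r := by
    rw [intervalIntegral.integral_of_le ht0, intervalIntegral.integral_of_le hT0]
    have h1 : Set.EqOn (fun s => ∫ r in s..T, F s r)
        (fun s => ∫ r in Set.Ioc (0:ℝ) T, (Set.Ioc s T).indicator (F s) r)
        (Set.Ioc (0:ℝ) t) := by
      intro s hs
      dsimp only
      rw [intervalIntegral.integral_of_le (hs.2.trans htT),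
        setIntegral_indicator measurableSet_Ioc,
        Set.inter_eq_self_of_subset_right (Set.Ioc_subset_Ioc_left hs.1.le)]
    rw [setIntegral_congr_fun measurableSet_Ioc h1]
    have hE : MeasurableSet {p : ℝ × ℝ | p.1 < p.2 ∧ p.2 ≤ T} :=
      (measurableSet_lt measurable_fst measurable_snd).inter
        (measurableSet_le measurable_snd measurable_const)
    have hFint : IntegrableOn (fun p : ℝ × ℝ => F p.1 p.2)
        (Set.Icc 0 t ×ˢ Set.Icc 0 T) (volume.prod volume) := by
      apply ContinuousOn.integrableOn_compact (isCompact_Icc.prod isCompact_Icc)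
      exact hFcont.mono (Set.prod_mono (Set.subset_univ _) Set.Subset.rfl)
    have hGeq : (Function.uncurry fun s r => (Set.Ioc s T).indicator (F s) r)
        = {p : ℝ × ℝ | p.1 < p.2 ∧ p.2 ≤ T}.indicator (fun p => F p.1 p.2) := by
      ext p
      simp [Function.uncurry, Set.indicator_apply, Set.mem_Ioc, Set.mem_setOf_eq]
    have hInt : Integrable (Function.uncurry fun s r => (Set.Ioc s T).indicator (F s) r)
        ((volume.restrict (Set.Ioc (0:ℝ) t)).prod (volume.restrict (Set.Ioc (0:ℝ) T))) := by
      rw [hGeq, Measure.prod_restrict]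
      exact ((hFint.mono_set
        (Set.prod_mono Set.Ioc_subset_Icc_self Set.Ioc_subset_Icc_self)).indicator hE)
    rw [MeasureTheory.integral_integral_swap hInt]
    apply setIntegral_congr_fun measurableSet_Ioc
    intro r hr
    dsimp only
    have h0 : ∀ᵐ s : ℝ ∂volume, s ≠ r := by
      rw [MeasureTheory.ae_iff]
      simp only [ne_eq, not_not, Set.setOf_eq_eq_singleton]
      exact measure_singleton r
    have hae : ∀ᵐ s : ℝ ∂(volume.restrict (Set.Ioc (0:ℝ) t)),
        (Set.Ioc s T).indicator (F s) r
          = (Set.Ioc (0:ℝ) (min t r)).indicator (fun s' => F s' r) s := by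
      filter_upwards [ae_restrict_of_ae h0, ae_restrict_mem measurableSet_Ioc] with s hsr hsmem
      by_cases hsr2 : s < r
      · have hs1 : r ∈ Set.Ioc s T := ⟨hsr2, hr.2⟩
        have hs2 : s ∈ Set.Ioc (0:ℝ) (min t r) := ⟨hsmem.1, le_min hsmem.2 hsr2.le⟩
        rw [Set.indicator_of_mem hs1, Set.indicator_of_mem hs2]
      · have hs1 : r ∉ Set.Ioc s T := fun hc => hsr2 hc.1
        have hs2 : s ∉ Set.Ioc (0:ℝ) (min t r) := by
          intro hc
          exact hsr2 (lt_of_le_of_ne (le_trans hc.2 (min_le_right _ _)) hsr)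
        rw [Set.indicator_of_notMem hs1, Set.indicator_of_notMem hs2]
    rw [MeasureTheory.integral_congr_ae hae,
      setIntegral_indicator measurableSet_Ioc,
      Set.inter_eq_self_of_subset_right (Set.Ioc_subset_Ioc_right (min_le_left t r)),
      ← intervalIntegral.integral_of_le (le_min ht0 hr.1.le)]
  rw [intervalIntegral.integral_congr stepA, fubini]
  exact intervalIntegral.integral_congr fun r hr =>
    stepC r (by rwa [Set.uIcc_of_le hT0] at hr)
end

section
/- Under Hypothesis 1, for every R > 0 there exist constants c₁, c₂ > 0 (depending only on A, C, T, R) such that for all x, x₀ ∈ ℝ^d with |x| ≤ R and |x₀| ≤ R and all h ∈ L²(0,T;ℝ^d): |exp(−½F(x) + G(x,h)) − exp(−½F(x₀) + G(x₀,h))| ≤ c₁ (1 + ‖h‖_{L²}) e^{c₂ ‖h‖_{L²}} |x − x₀|. -/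
open MeasureTheory Matrix Filter
open scoped RealInnerProductSpace

/-- A `d × d` real matrix viewed as a continuous linear map on Euclidean space
(so that `‖matCLM M‖` is the operator norm of `M`). -/
noncomputable def matCLM {d : ℕ} (M : Matrix (Fin d) (Fin d) ℝ) :
    EuclideanSpace ℝ (Fin d) →L[ℝ] EuclideanSpace ℝ (Fin d) :=
  Matrix.toEuclideanCLM (𝕜 := ℝ) M

/-- `u(x,t) = e^{(T−t)Aᵀ} U⁻¹ e^{TA} x`. -/
noncomputable def uFun {d : ℕ} (A C : Matrix (Fin d) (Fin d) ℝ) (T : ℝ)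
    (x : EuclideanSpace ℝ (Fin d)) (t : ℝ) : EuclideanSpace ℝ (Fin d) :=
  matCLM (matExp (T - t) Aᵀ * (matU A C T)⁻¹ * matExp T A) x

/-- `F(x) = ∫₀ᵀ∫₀ᵀ ⟨u(x,t), K(t,s) u(x,s)⟩ ds dt`. -/
noncomputable def Ffun {d : ℕ} (A C : Matrix (Fin d) (Fin d) ℝ) (T : ℝ)
    (x : EuclideanSpace ℝ (Fin d)) : ℝ :=
  ∫ t in (0:ℝ)..T, ∫ s in (0:ℝ)..T, ⟪uFun A C T x t, matCLM (kerK A C t s) (uFun A C T x s)⟫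

/-- `G(x,h) = ∫₀ᵀ ⟨u(x,t), h(t)⟩ dt`. -/
noncomputable def Gfun {d : ℕ} (A C : Matrix (Fin d) (Fin d) ℝ) (T : ℝ)
    (x : EuclideanSpace ℝ (Fin d)) (h : ℝ → EuclideanSpace ℝ (Fin d)) : ℝ :=
  ∫ t in (0:ℝ)..T, ⟪uFun A C T x t, h t⟫


namespace CMAux

open intervalIntegral

variable {d : ℕ}

set_option maxHeartbeats 2000000

noncomputable def matCLMlin (d : ℕ) :
    Matrix (Fin d) (Fin d) ℝ →ₗ[ℝ] (EuclideanSpace ℝ (Fin d) →L[ℝ] EuclideanSpace ℝ (Fin d)) where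
  toFun := matCLM
  map_add' := fun x y => map_add _ x y
  map_smul' := fun r x => map_smul (Matrix.toEuclideanCLM (𝕜 := ℝ)) r x

noncomputable def matCLMsymmlin (d : ℕ) :
    (EuclideanSpace ℝ (Fin d) →L[ℝ] EuclideanSpace ℝ (Fin d)) →ₗ[ℝ] Matrix (Fin d) (Fin d) ℝ where
  toFun := (Matrix.toEuclideanCLM (𝕜 := ℝ)).symm
  map_add' := fun x y => map_add ((Matrix.toEuclideanCLM (𝕜 := ℝ)).symm) x y
  map_smul' := fun r x => map_smul ((Matrix.toEuclideanCLM (𝕜 := ℝ)).symm) r x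

lemma continuous_matCLM : Continuous (matCLM (d := d)) :=
  (matCLMlin d).continuous_of_finiteDimensional

lemma continuous_matCLMsymm :
    Continuous ((Matrix.toEuclideanCLM (𝕜 := ℝ) (n := Fin d)).symm) :=
  (matCLMsymmlin d).continuous_of_finiteDimensional

lemma matCLM_mul (M N : Matrix (Fin d) (Fin d) ℝ) :
    matCLM (M * N) = matCLM M * matCLM N := map_mul _ M N

lemma matCLM_exp (B : Matrix (Fin d) (Fin d) ℝ) :
    matCLM (NormedSpace.exp B) = NormedSpace.exp (matCLM B) := by
  set e := Matrix.toEuclideanCLM (𝕜 := ℝ) (n := Fin d)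
  have hg : Summable fun n : ℕ => (n.factorial⁻¹ : ℝ) • (matCLM B) ^ n :=
    NormedSpace.expSeries_summable' (𝕂 := ℝ) (matCLM B)
  have h2 : HasSum (fun n : ℕ => e.symm ((n.factorial⁻¹ : ℝ) • (matCLM B) ^ n))
      (e.symm (NormedSpace.exp (matCLM B))) := by
    rw [NormedSpace.exp_eq_tsum (𝕂 := ℝ)]
    exact hg.hasSum.map (matCLMsymmlin d).toAddMonoidHom (continuous_matCLMsymm)
  have h3 : ∀ n : ℕ, e.symm ((n.factorial⁻¹ : ℝ) • (matCLM B) ^ n)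
      = (n.factorial⁻¹ : ℝ) • B ^ n := by
    intro n
    rw [_root_.map_smul, map_pow, show e.symm (matCLM B) = B from e.symm_apply_apply B]
  rw [funext h3] at h2
  have h4 : NormedSpace.exp B = e.symm (NormedSpace.exp (matCLM B)) := by
    rw [NormedSpace.exp_eq_tsum (𝕂 := ℝ)]
    exact h2.tsum_eq
  rw [h4]
  show e _ = _
  rw [e.apply_symm_apply]

lemma matCLM_matExp (t : ℝ) (A : Matrix (Fin d) (Fin d) ℝ) :
    matCLM (matExp t A) = NormedSpace.exp (t • matCLM A) := by
  rw [matExp, matCLM_exp]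
  congr 1
  exact map_smul (Matrix.toEuclideanCLM (𝕜 := ℝ)) t A

lemma matExp_eq_symm (t : ℝ) (A : Matrix (Fin d) (Fin d) ℝ) :
    matExp t A
      = (Matrix.toEuclideanCLM (𝕜 := ℝ)).symm (NormedSpace.exp (t • matCLM A)) := by
  rw [← matCLM_matExp]
  exact ((Matrix.toEuclideanCLM (𝕜 := ℝ)).symm_apply_apply _).symm

lemma continuous_matExp (A : Matrix (Fin d) (Fin d) ℝ) :
    Continuous fun t : ℝ => matExp t A := by
  simp only [matExp_eq_symm]
  exact continuous_matCLMsymm.comp ((continuous_iff_continuousAt.2 fun x => (NormedSpace.exp_analytic (𝕂 := ℝ) x).continuousAt).comp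
    (continuous_id.smul continuous_const))

lemma norm_exp_le (hd : 1 ≤ d) (y : EuclideanSpace ℝ (Fin d) →L[ℝ] EuclideanSpace ℝ (Fin d)) :
    ‖NormedSpace.exp y‖ ≤ Real.exp ‖y‖ := by
  haveI : Nontrivial (EuclideanSpace ℝ (Fin d)) := by
    refine ⟨⟨0, EuclideanSpace.single ⟨0, hd⟩ 1, ?_⟩⟩
    intro hcon
    have := congrArg (fun v : EuclideanSpace ℝ (Fin d) => v ⟨0, hd⟩) hcon
    simp at this
  rw [NormedSpace.exp_eq_tsum (𝕂 := ℝ)]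
  refine le_trans (norm_tsum_le_tsum_norm (NormedSpace.norm_expSeries_summable' y)) ?_
  have hexp : Real.exp ‖y‖ = ∑' n : ℕ, ‖y‖ ^ n / n.factorial := by
    rw [Real.exp_eq_exp_ℝ, NormedSpace.exp_eq_tsum_div]
  rw [hexp]
  refine Summable.tsum_le_tsum ?_ (NormedSpace.norm_expSeries_summable' y)
    (Real.summable_pow_div_factorial ‖y‖)
  intro n
  rw [norm_smul]
  rcases Nat.eq_zero_or_pos n with h0 | hpos
  · subst h0; simp [ContinuousLinearMap.norm_id_le]
  · calc ‖((n.factorial : ℝ))⁻¹‖ * ‖y ^ n‖ ≤ ((n.factorial : ℝ))⁻¹ * ‖y‖ ^ n := by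
          rw [Real.norm_eq_abs, abs_of_nonneg (by positivity)]
          exact mul_le_mul_of_nonneg_left (norm_pow_le' y hpos) (by positivity)
    _ = ‖y‖ ^ n / n.factorial := by ring

lemma abs_coord_le (v : EuclideanSpace ℝ (Fin d)) (i : Fin d) : |v i| ≤ ‖v‖ := by
  have h := Finset.single_le_sum (f := fun j => ‖v j‖^2) (fun j _ => by positivity)
    (Finset.mem_univ i)
  rw [EuclideanSpace.norm_eq]
  refine le_trans ?_ (Real.sqrt_le_sqrt h)
  rw [Real.sqrt_sq (norm_nonneg _)]
  exact le_of_eq (Real.norm_eq_abs _).symm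

lemma abs_entry_le (M : Matrix (Fin d) (Fin d) ℝ) (i j : Fin d) : |M i j| ≤ ‖matCLM M‖ := by
  have h1 : M i j = matCLM M (EuclideanSpace.single j 1) i := by
    show M i j = M.mulVec (EuclideanSpace.single j 1) i
    have h2 : M.mulVec (EuclideanSpace.single j 1) i
        = ∑ k, M i k * (EuclideanSpace.single j 1 : EuclideanSpace ℝ (Fin d)) k := rfl
    rw [h2]
    simp [EuclideanSpace.single_apply]
  rw [h1]
  refine (abs_coord_le _ i).trans ?_
  refine (ContinuousLinearMap.le_opNorm _ _).trans ?_
  rw [EuclideanSpace.norm_single, norm_one, mul_one]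

lemma norm_coord_sum (v : EuclideanSpace ℝ (Fin d)) : ‖v‖ ≤ ∑ i, |v i| := by
  have h1 : ∑ i, ‖v i‖^2 ≤ (∑ i, ‖v i‖)^2 :=
    Finset.sum_sq_le_sq_sum_of_nonneg (fun i _ => norm_nonneg _)
  calc ‖v‖ = Real.sqrt (∑ i, ‖v i‖^2) := EuclideanSpace.norm_eq v
    _ ≤ Real.sqrt ((∑ i, ‖v i‖)^2) := Real.sqrt_le_sqrt h1
    _ = ∑ i, ‖v i‖ := Real.sqrt_sq (by positivity)
    _ = ∑ i, |v i| := by simp [Real.norm_eq_abs]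

lemma norm_matCLM_le (M : Matrix (Fin d) (Fin d) ℝ) : ‖matCLM M‖ ≤ ∑ i, ∑ j, |M i j| := by
  refine ContinuousLinearMap.opNorm_le_bound _
    (Finset.sum_nonneg fun i _ => Finset.sum_nonneg fun j _ => abs_nonneg _) fun x => ?_
  calc ‖matCLM M x‖ ≤ ∑ i, |matCLM M x i| := norm_coord_sum _
    _ ≤ ∑ i, ∑ j, |M i j| * ‖x‖ := by
        refine Finset.sum_le_sum fun i _ => ?_
        show |M.mulVec x i| ≤ _
        rw [Matrix.mulVec, dotProduct]
        refine (Finset.abs_sum_le_sum_abs _ _).trans ?_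
        refine Finset.sum_le_sum fun j _ => ?_
        rw [abs_mul]
        exact mul_le_mul_of_nonneg_left (abs_coord_le x j) (abs_nonneg _)
    _ = (∑ i, ∑ j, |M i j|) * ‖x‖ := by rw [Finset.sum_mul]; congr 1; ext i; rw [Finset.sum_mul]

/-! ### Constants -/

noncomputable def Mu (A C : Matrix (Fin d) (Fin d) ℝ) (T : ℝ) : ℝ :=
  Real.exp (|T| * ‖matCLM Aᵀ‖) * ‖matCLM (matU A C T)⁻¹‖ * Real.exp (|T| * ‖matCLM A‖)

lemma Mu_nonneg (A C : Matrix (Fin d) (Fin d) ℝ) (T : ℝ) : 0 ≤ Mu A C T := by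
  unfold Mu; positivity

noncomputable def EK (A C : Matrix (Fin d) (Fin d) ℝ) (T : ℝ) : ℝ :=
  Real.exp (|T| * ‖matCLM A‖) * ‖matCLM C‖ * Real.exp (|T| * ‖matCLM Aᵀ‖)

lemma EK_nonneg (A C : Matrix (Fin d) (Fin d) ℝ) (T : ℝ) : 0 ≤ EK A C T := by
  unfold EK; positivity

noncomputable def DK (d : ℕ) (A C : Matrix (Fin d) (Fin d) ℝ) (T : ℝ) : ℝ :=
  (d : ℝ) * d * (T * EK A C T)

lemma DK_nonneg (A C : Matrix (Fin d) (Fin d) ℝ) {T : ℝ} (hT : 0 ≤ T) : 0 ≤ DK d A C T := by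
  have := EK_nonneg A C T
  unfold DK; positivity

lemma norm_matExp_le (hd : 1 ≤ d) {τ b : ℝ} (hτ : |τ| ≤ b) (A : Matrix (Fin d) (Fin d) ℝ) :
    ‖matCLM (matExp τ A)‖ ≤ Real.exp (b * ‖matCLM A‖) := by
  rw [matCLM_matExp]
  refine (norm_exp_le hd _).trans
    (Real.exp_le_exp.2 ((norm_smul_le τ (matCLM A)).trans ?_))
  rw [Real.norm_eq_abs]
  exact mul_le_mul_of_nonneg_right hτ (norm_nonneg _)

/-! ### Properties of `uFun` -/

lemma uFun_eq (A C : Matrix (Fin d) (Fin d) ℝ) (T : ℝ) (x : EuclideanSpace ℝ (Fin d)) (t : ℝ) :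
    uFun A C T x t
      = (matCLM (matExp (T - t) Aᵀ) * (matCLM (matU A C T)⁻¹ * matCLM (matExp T A))) x := by
  unfold uFun
  rw [mul_assoc, matCLM_mul, matCLM_mul]

lemma continuous_uFun (A C : Matrix (Fin d) (Fin d) ℝ) (T : ℝ) (x : EuclideanSpace ℝ (Fin d)) :
    Continuous fun t => uFun A C T x t := by
  simp only [uFun_eq]
  refine Continuous.clm_apply ?_ continuous_const
  exact Continuous.mul (continuous_matCLM.comp
    ((continuous_matExp Aᵀ).comp (continuous_const.sub continuous_id))) continuous_const

lemma norm_uFun_le (hd : 1 ≤ d) (A C : Matrix (Fin d) (Fin d) ℝ) {T t : ℝ}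
    (ht0 : 0 ≤ t) (htT : t ≤ T) (x : EuclideanSpace ℝ (Fin d)) :
    ‖uFun A C T x t‖ ≤ Mu A C T * ‖x‖ := by
  rw [uFun_eq]
  refine (ContinuousLinearMap.le_opNorm _ _).trans
    (mul_le_mul_of_nonneg_right ?_ (norm_nonneg x))
  have hTt : |T - t| ≤ |T| := by
    rw [abs_of_nonneg (by linarith), abs_of_nonneg (by linarith)]
    linarith
  have h1 : ‖matCLM (matExp (T - t) Aᵀ)‖ ≤ Real.exp (|T| * ‖matCLM Aᵀ‖) :=
    norm_matExp_le hd hTt Aᵀ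
  have h2 : ‖matCLM (matExp T A)‖ ≤ Real.exp (|T| * ‖matCLM A‖) :=
    norm_matExp_le hd le_rfl A
  calc ‖matCLM (matExp (T - t) Aᵀ) * (matCLM (matU A C T)⁻¹ * matCLM (matExp T A))‖
      ≤ ‖matCLM (matExp (T - t) Aᵀ)‖ * (‖matCLM (matU A C T)⁻¹‖ * ‖matCLM (matExp T A)‖) :=
        (norm_mul_le _ _).trans
          (mul_le_mul_of_nonneg_left (norm_mul_le _ _) (norm_nonneg _))
    _ ≤ Real.exp (|T| * ‖matCLM Aᵀ‖)
          * (‖matCLM (matU A C T)⁻¹‖ * Real.exp (|T| * ‖matCLM A‖)) := by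
        refine mul_le_mul h1 (mul_le_mul_of_nonneg_left h2 (norm_nonneg _)) ?_ ?_
        · positivity
        · positivity
    _ = Mu A C T := by unfold Mu; ring

lemma uFun_sub (A C : Matrix (Fin d) (Fin d) ℝ) (T : ℝ) (x y : EuclideanSpace ℝ (Fin d)) (t : ℝ) :
    uFun A C T (x - y) t = uFun A C T x t - uFun A C T y t :=
  map_sub (matCLM _) x y

/-! ### Properties of `kerK` -/

lemma abs_kerK_entry_le (hd : 1 ≤ d) (A C : Matrix (Fin d) (Fin d) ℝ) {T t s : ℝ}
    (ht : t ∈ Set.Icc 0 T) (hs : s ∈ Set.Icc 0 T) (i j : Fin d) :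
    |kerK A C t s i j| ≤ T * EK A C T := by
  have hmin0 : 0 ≤ min t s := le_min ht.1 hs.1
  have hminT : min t s ≤ T := (min_le_left _ _).trans ht.2
  have hTnn : 0 ≤ T := le_trans ht.1 ht.2
  have hb : ∀ r ∈ Set.uIoc (0:ℝ) (min t s),
      ‖(matExp (t - r) A * C * matExp (s - r) Aᵀ) i j‖ ≤ EK A C T := by
    intro r hr
    rw [Set.uIoc_of_le hmin0] at hr
    have hrt : r ≤ t := hr.2.trans (min_le_left _ _)
    have hrs : r ≤ s := hr.2.trans (min_le_right _ _)
    have h1 : |t - r| ≤ |T| := by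
      rw [abs_of_nonneg (by linarith), abs_of_nonneg hTnn]
      have := hr.1
      linarith [ht.2]
    have h2 : |s - r| ≤ |T| := by
      rw [abs_of_nonneg (by linarith), abs_of_nonneg hTnn]
      have := hr.1
      linarith [hs.2]
    rw [Real.norm_eq_abs]
    refine (abs_entry_le _ i j).trans ?_
    rw [matCLM_mul, matCLM_mul]
    calc ‖matCLM (matExp (t - r) A) * matCLM C * matCLM (matExp (s - r) Aᵀ)‖
        ≤ ‖matCLM (matExp (t - r) A)‖ * ‖matCLM C‖ * ‖matCLM (matExp (s - r) Aᵀ)‖ :=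
          (norm_mul_le _ _).trans
            (mul_le_mul_of_nonneg_right (norm_mul_le _ _) (norm_nonneg _))
      _ ≤ EK A C T := by
          unfold EK
          refine mul_le_mul (mul_le_mul_of_nonneg_right (norm_matExp_le hd h1 A)
            (norm_nonneg _)) (norm_matExp_le hd h2 Aᵀ) (norm_nonneg _) ?_
          positivity
  have hres := intervalIntegral.norm_integral_le_of_norm_le_const hb
  rw [Real.norm_eq_abs] at hres
  have hgoal : |kerK A C t s i j|
      ≤ EK A C T * |min t s - 0| := hres
  refine hgoal.trans ?_
  rw [sub_zero, abs_of_nonneg hmin0, mul_comm]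
  exact mul_le_mul_of_nonneg_right hminT (EK_nonneg A C T)

lemma norm_matCLM_kerK_le (hd : 1 ≤ d) (A C : Matrix (Fin d) (Fin d) ℝ) {T t s : ℝ}
    (ht : t ∈ Set.Icc 0 T) (hs : s ∈ Set.Icc 0 T) :
    ‖matCLM (kerK A C t s)‖ ≤ DK d A C T := by
  refine (norm_matCLM_le _).trans ?_
  calc ∑ i, ∑ j, |kerK A C t s i j|
      ≤ ∑ _i : Fin d, ∑ _j : Fin d, (T * EK A C T) :=
        Finset.sum_le_sum fun i _ => Finset.sum_le_sum fun j _ =>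
          abs_kerK_entry_le hd A C ht hs i j
    _ = DK d A C T := by
        simp [Finset.sum_const, DK]
        ring

lemma continuous_kerK (A C : Matrix (Fin d) (Fin d) ℝ) :
    Continuous fun p : ℝ × ℝ => kerK A C p.1 p.2 := by
  have hent : ∀ i j : Fin d, Continuous fun q : (ℝ × ℝ) × ℝ =>
      (matExp (q.1.1 - q.2) A * C * matExp (q.1.2 - q.2) Aᵀ) i j := by
    intro i j
    have hM : Continuous fun q : (ℝ × ℝ) × ℝ =>
        matExp (q.1.1 - q.2) A * C * matExp (q.1.2 - q.2) Aᵀ := by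
      refine Continuous.mul (Continuous.mul ?_ continuous_const) ?_
      · exact (continuous_matExp A).comp (continuous_fst.fst.sub continuous_snd)
      · exact (continuous_matExp Aᵀ).comp (continuous_fst.snd.sub continuous_snd)
    exact (continuous_apply j).comp ((continuous_apply i).comp hM)
  refine continuous_matrix fun i j => ?_
  have heq : ∀ p : ℝ × ℝ, kerK A C p.1 p.2 i j
      = ∫ r in (0:ℝ)..(min p.1 p.2),
          (matExp (p.1 - r) A * C * matExp (p.2 - r) Aᵀ) i j := fun p => rfl
  simp only [heq]
  exact intervalIntegral.continuous_parametric_intervalIntegral_of_continuous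
    (f := fun (p : ℝ × ℝ) (r : ℝ) => (matExp (p.1 - r) A * C * matExp (p.2 - r) Aᵀ) i j)
    (by exact hent i j) (continuous_fst.min continuous_snd)

/-! ### The bilinear double integral -/

noncomputable def phi (A C : Matrix (Fin d) (Fin d) ℝ) (T : ℝ)
    (x y : EuclideanSpace ℝ (Fin d)) (p : ℝ × ℝ) : ℝ :=
  ⟪uFun A C T x p.1, matCLM (kerK A C p.1 p.2) (uFun A C T y p.2)⟫

lemma continuous_phi (A C : Matrix (Fin d) (Fin d) ℝ) (T : ℝ)
    (x y : EuclideanSpace ℝ (Fin d)) : Continuous (phi A C T x y) := by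
  refine Continuous.inner ((continuous_uFun A C T x).comp continuous_fst) ?_
  exact Continuous.clm_apply (continuous_matCLM.comp (continuous_kerK A C))
    ((continuous_uFun A C T y).comp continuous_snd)

lemma abs_phi_le (hd : 1 ≤ d) (A C : Matrix (Fin d) (Fin d) ℝ) {T : ℝ}
    (x y : EuclideanSpace ℝ (Fin d)) {p : ℝ × ℝ}
    (ht : p.1 ∈ Set.Icc 0 T) (hs : p.2 ∈ Set.Icc 0 T) :
    |phi A C T x y p| ≤ Mu A C T * ‖x‖ * (DK d A C T * (Mu A C T * ‖y‖)) := by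
  have hTnn : 0 ≤ T := le_trans ht.1 ht.2
  refine (abs_real_inner_le_norm _ _).trans ?_
  have h1 : ‖uFun A C T x p.1‖ ≤ Mu A C T * ‖x‖ := norm_uFun_le hd A C ht.1 ht.2 x
  have h2 : ‖uFun A C T y p.2‖ ≤ Mu A C T * ‖y‖ := norm_uFun_le hd A C hs.1 hs.2 y
  have h3 : ‖matCLM (kerK A C p.1 p.2) (uFun A C T y p.2)‖
      ≤ DK d A C T * (Mu A C T * ‖y‖) := by
    refine (ContinuousLinearMap.le_opNorm _ _).trans ?_
    exact mul_le_mul (norm_matCLM_kerK_le hd A C ht hs) h2 (norm_nonneg _)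
      (DK_nonneg A C hTnn)
  refine mul_le_mul h1 h3 (norm_nonneg _) ?_
  have := Mu_nonneg A C T
  positivity

noncomputable def Iphi (A C : Matrix (Fin d) (Fin d) ℝ) (T : ℝ)
    (x y : EuclideanSpace ℝ (Fin d)) : ℝ :=
  ∫ t in (0:ℝ)..T, ∫ s in (0:ℝ)..T, phi A C T x y (t, s)

lemma Ffun_eq_Iphi (A C : Matrix (Fin d) (Fin d) ℝ) (T : ℝ) (x : EuclideanSpace ℝ (Fin d)) :
    Ffun A C T x = Iphi A C T x x := rfl

lemma abs_double_le {T : ℝ} (hT : 0 ≤ T) {f : ℝ × ℝ → ℝ} {M : ℝ}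
    (hb : ∀ p : ℝ × ℝ, p.1 ∈ Set.Icc 0 T → p.2 ∈ Set.Icc 0 T → |f p| ≤ M) :
    |∫ t in (0:ℝ)..T, ∫ s in (0:ℝ)..T, f (t, s)| ≤ M * T * T := by
  have hM : 0 ≤ M := (abs_nonneg _).trans (hb (0, 0) ⟨le_rfl, hT⟩ ⟨le_rfl, hT⟩)
  have hinner : ∀ t ∈ Set.uIoc (0:ℝ) T, ‖∫ s in (0:ℝ)..T, f (t, s)‖ ≤ M * T := by
    intro t ht
    rw [Set.uIoc_of_le hT] at ht
    have h2 : ∀ s ∈ Set.uIoc (0:ℝ) T, ‖f (t, s)‖ ≤ M := by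
      intro s hs
      rw [Set.uIoc_of_le hT] at hs
      rw [Real.norm_eq_abs]
      exact hb (t, s) ⟨ht.1.le, ht.2⟩ ⟨hs.1.le, hs.2⟩
    have := intervalIntegral.norm_integral_le_of_norm_le_const h2
    rwa [sub_zero, abs_of_nonneg hT] at this
  have := intervalIntegral.norm_integral_le_of_norm_le_const hinner
  rw [sub_zero, abs_of_nonneg hT, Real.norm_eq_abs] at this
  linarith

lemma double_sub {T : ℝ} {f g : ℝ × ℝ → ℝ} (hf : Continuous f) (hg : Continuous g) :
    (∫ t in (0:ℝ)..T, ∫ s in (0:ℝ)..T, f (t, s))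
        - (∫ t in (0:ℝ)..T, ∫ s in (0:ℝ)..T, g (t, s))
      = ∫ t in (0:ℝ)..T, ∫ s in (0:ℝ)..T, (f (t, s) - g (t, s)) := by
  have hfc : Continuous fun t : ℝ => ∫ s in (0:ℝ)..T, f (t, s) :=
    intervalIntegral.continuous_parametric_intervalIntegral_of_continuous'
      (f := fun t s => f (t, s)) hf 0 T
  have hgc : Continuous fun t : ℝ => ∫ s in (0:ℝ)..T, g (t, s) :=
    intervalIntegral.continuous_parametric_intervalIntegral_of_continuous'
      (f := fun t s => g (t, s)) hg 0 T
  rw [← intervalIntegral.integral_sub (hfc.intervalIntegrable 0 T)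
    (hgc.intervalIntegrable 0 T)]
  refine intervalIntegral.integral_congr fun t _ => ?_
  exact (intervalIntegral.integral_sub
    ((hf.comp (Continuous.prodMk_right t)).intervalIntegrable 0 T)
    ((hg.comp (Continuous.prodMk_right t)).intervalIntegrable 0 T)).symm

lemma double_add {T : ℝ} {f g : ℝ × ℝ → ℝ} (hf : Continuous f) (hg : Continuous g) :
    (∫ t in (0:ℝ)..T, ∫ s in (0:ℝ)..T, (f (t, s) + g (t, s)))
      = (∫ t in (0:ℝ)..T, ∫ s in (0:ℝ)..T, f (t, s))
        + (∫ t in (0:ℝ)..T, ∫ s in (0:ℝ)..T, g (t, s)) := by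
  have hfc : Continuous fun t : ℝ => ∫ s in (0:ℝ)..T, f (t, s) :=
    intervalIntegral.continuous_parametric_intervalIntegral_of_continuous'
      (f := fun t s => f (t, s)) hf 0 T
  have hgc : Continuous fun t : ℝ => ∫ s in (0:ℝ)..T, g (t, s) :=
    intervalIntegral.continuous_parametric_intervalIntegral_of_continuous'
      (f := fun t s => g (t, s)) hg 0 T
  rw [← intervalIntegral.integral_add (hfc.intervalIntegrable 0 T)
    (hgc.intervalIntegrable 0 T)]
  refine intervalIntegral.integral_congr fun t _ => ?_
  exact intervalIntegral.integral_add
    ((hf.comp (Continuous.prodMk_right t)).intervalIntegrable 0 T)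
    ((hg.comp (Continuous.prodMk_right t)).intervalIntegrable 0 T)

lemma Ffun_sub_eq (A C : Matrix (Fin d) (Fin d) ℝ) (T : ℝ)
    (x x₀ : EuclideanSpace ℝ (Fin d)) :
    Ffun A C T x - Ffun A C T x₀
      = Iphi A C T (x - x₀) x + Iphi A C T x₀ (x - x₀) := by
  have hpt : ∀ p : ℝ × ℝ, phi A C T x x p - phi A C T x₀ x₀ p
      = phi A C T (x - x₀) x p + phi A C T x₀ (x - x₀) p := by
    intro p
    simp only [phi]
    rw [uFun_sub, uFun_sub, map_sub, inner_sub_left, inner_sub_right]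
    ring
  rw [Ffun_eq_Iphi, Ffun_eq_Iphi, Iphi, Iphi]
  rw [double_sub (continuous_phi A C T x x) (continuous_phi A C T x₀ x₀)]
  simp only [hpt]
  rw [double_add (continuous_phi A C T (x - x₀) x) (continuous_phi A C T x₀ (x - x₀))]
  rfl

lemma abs_Iphi_le (hd : 1 ≤ d) (A C : Matrix (Fin d) (Fin d) ℝ) {T : ℝ} (hT : 0 ≤ T)
    (x y : EuclideanSpace ℝ (Fin d)) :
    |Iphi A C T x y|
      ≤ (Mu A C T * DK d A C T * Mu A C T * T * T) * (‖x‖ * ‖y‖) := by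
  have := abs_double_le hT (f := phi A C T x y)
    (M := Mu A C T * ‖x‖ * (DK d A C T * (Mu A C T * ‖y‖)))
    (fun p hp hq => abs_phi_le hd A C x y hp hq)
  refine le_trans this (le_of_eq ?_)
  ring

/-! ### Properties of `Gfun` -/

lemma integrableOn_inner_u (hd : 1 ≤ d) (A C : Matrix (Fin d) (Fin d) ℝ) {T : ℝ} (hT : 0 < T)
    (x : EuclideanSpace ℝ (Fin d)) (h : ℝ → EuclideanSpace ℝ (Fin d))
    (hm : MeasureTheory.MemLp h 2 (MeasureTheory.volume.restrict (Set.Ioc 0 T))) :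
    MeasureTheory.IntegrableOn (fun t => ⟪uFun A C T x t, h t⟫) (Set.Ioc 0 T)
      MeasureTheory.volume := by
  have hh1 : MeasureTheory.Integrable h (MeasureTheory.volume.restrict (Set.Ioc 0 T)) :=
    (hm.mono_exponent one_le_two).integrable le_rfl
  refine MeasureTheory.Integrable.mono' ((hh1.norm.const_mul (Mu A C T * ‖x‖))) ?_ ?_
  · exact ((continuous_uFun A C T x).aestronglyMeasurable).inner hm.1
  · refine (MeasureTheory.ae_restrict_iff' measurableSet_Ioc).2
      (Filter.Eventually.of_forall fun t ht => ?_)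
    rw [Real.norm_eq_abs]
    refine (abs_real_inner_le_norm _ _).trans ?_
    exact mul_le_mul_of_nonneg_right (norm_uFun_le hd A C ht.1.le ht.2 x) (norm_nonneg _)

lemma Gfun_sub_eq (hd : 1 ≤ d) (A C : Matrix (Fin d) (Fin d) ℝ) {T : ℝ} (hT : 0 < T)
    (x x₀ : EuclideanSpace ℝ (Fin d)) (h : ℝ → EuclideanSpace ℝ (Fin d))
    (hm : MeasureTheory.MemLp h 2 (MeasureTheory.volume.restrict (Set.Ioc 0 T))) :
    Gfun A C T x h - Gfun A C T x₀ h = Gfun A C T (x - x₀) h := by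
  unfold Gfun
  have hi : ∀ y : EuclideanSpace ℝ (Fin d),
      IntervalIntegrable (fun t => ⟪uFun A C T y t, h t⟫) MeasureTheory.volume 0 T := by
    intro y
    rw [intervalIntegrable_iff_integrableOn_Ioc_of_le hT.le]
    exact integrableOn_inner_u hd A C hT y h hm
  rw [← intervalIntegral.integral_sub (hi x) (hi x₀)]
  refine intervalIntegral.integral_congr fun t _ => ?_
  rw [uFun_sub, inner_sub_left]

lemma l1_le {T : ℝ} (h : ℝ → EuclideanSpace ℝ (Fin d))
    (hm : MeasureTheory.MemLp h 2 (MeasureTheory.volume.restrict (Set.Ioc 0 T))) :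
    ∫ t in Set.Ioc (0:ℝ) T, ‖h t‖
      ≤ ((MeasureTheory.volume.restrict (Set.Ioc (0:ℝ) T)) Set.univ ^ ((1:ℝ)/2)).toReal
        * (MeasureTheory.eLpNorm h 2
            (MeasureTheory.volume.restrict (Set.Ioc (0:ℝ) T))).toReal := by
  set μ := MeasureTheory.volume.restrict (Set.Ioc (0:ℝ) T)
  have h1 : ∫ t, ‖h t‖ ∂μ = (MeasureTheory.eLpNorm h 1 μ).toReal := by
    rw [MeasureTheory.integral_norm_eq_lintegral_enorm hm.1,
      MeasureTheory.eLpNorm_one_eq_lintegral_enorm]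
  have h2 : MeasureTheory.eLpNorm h 1 μ
      ≤ MeasureTheory.eLpNorm h 2 μ * μ Set.univ ^ ((1:ℝ)/2) := by
    have := MeasureTheory.eLpNorm_le_eLpNorm_mul_rpow_measure_univ (p := 1) (q := 2)
      (by norm_num) hm.1
    norm_num at this
    convert this using 3
  rw [h1]
  have hfin : MeasureTheory.eLpNorm h 2 μ * μ Set.univ ^ ((1:ℝ)/2) ≠ ⊤ := by
    apply ENNReal.mul_ne_top hm.2.ne
    refine (ENNReal.rpow_lt_top_of_nonneg (by norm_num) ?_).ne
    exact (MeasureTheory.measure_lt_top μ _).ne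
  calc (MeasureTheory.eLpNorm h 1 μ).toReal
      ≤ (MeasureTheory.eLpNorm h 2 μ * μ Set.univ ^ ((1:ℝ)/2)).toReal :=
        ENNReal.toReal_mono hfin h2
    _ = _ := by rw [ENNReal.toReal_mul]; ring

lemma abs_Gfun_le (hd : 1 ≤ d) (A C : Matrix (Fin d) (Fin d) ℝ) {T : ℝ} (hT : 0 < T)
    (x : EuclideanSpace ℝ (Fin d)) (h : ℝ → EuclideanSpace ℝ (Fin d))
    (hm : MeasureTheory.MemLp h 2 (MeasureTheory.volume.restrict (Set.Ioc 0 T))) :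
    |Gfun A C T x h|
      ≤ Mu A C T * ‖x‖
        * (((MeasureTheory.volume.restrict (Set.Ioc (0:ℝ) T)) Set.univ ^ ((1:ℝ)/2)).toReal
          * (MeasureTheory.eLpNorm h 2
              (MeasureTheory.volume.restrict (Set.Ioc (0:ℝ) T))).toReal) := by
  have hMux : 0 ≤ Mu A C T * ‖x‖ := mul_nonneg (Mu_nonneg A C T) (norm_nonneg x)
  have hh1 : MeasureTheory.Integrable h (MeasureTheory.volume.restrict (Set.Ioc 0 T)) :=
    (hm.mono_exponent one_le_two).integrable le_rfl
  unfold Gfun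
  rw [intervalIntegral.integral_of_le hT.le]
  have h1 : |∫ t in Set.Ioc (0:ℝ) T, ⟪uFun A C T x t, h t⟫|
      ≤ ∫ t in Set.Ioc (0:ℝ) T, ‖⟪uFun A C T x t, h t⟫‖ := by
    rw [← Real.norm_eq_abs]
    exact MeasureTheory.norm_integral_le_integral_norm _
  refine h1.trans ?_
  have h2 : ∫ t in Set.Ioc (0:ℝ) T, ‖⟪uFun A C T x t, h t⟫‖
      ≤ ∫ t in Set.Ioc (0:ℝ) T, (Mu A C T * ‖x‖) * ‖h t‖ := by
    refine MeasureTheory.integral_mono_ae (integrableOn_inner_u hd A C hT x h hm).norm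
      (hh1.norm.const_mul _) ?_
    refine (MeasureTheory.ae_restrict_iff' measurableSet_Ioc).2
      (Filter.Eventually.of_forall fun t ht => ?_)
    dsimp only
    rw [Real.norm_eq_abs]
    refine (abs_real_inner_le_norm _ _).trans ?_
    exact mul_le_mul_of_nonneg_right (norm_uFun_le hd A C ht.1.le ht.2 x) (norm_nonneg _)
  refine h2.trans ?_
  rw [MeasureTheory.integral_const_mul]
  exact mul_le_mul_of_nonneg_left (l1_le h hm) hMux

/-! ### Elementary exponential estimate -/

lemma exp_diff {a b m : ℝ} (ha : a ≤ m) (hb : b ≤ m) :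
    |Real.exp a - Real.exp b| ≤ Real.exp m * |a - b| := by
  wlog hab : b ≤ a generalizing a b
  · rw [abs_sub_comm, abs_sub_comm a b]
    exact this hb ha (le_of_not_ge hab)
  rw [abs_of_nonneg (sub_nonneg.2 (Real.exp_le_exp.2 hab)),
    abs_of_nonneg (sub_nonneg.2 hab)]
  have h1 : (b - a) + 1 ≤ Real.exp (b - a) := Real.add_one_le_exp (b - a)
  have h2 : Real.exp b = Real.exp a * Real.exp (b - a) := by
    rw [← Real.exp_add]
    congr 1
    ring
  have h4 : Real.exp a ≤ Real.exp m := Real.exp_le_exp.2 ha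
  nlinarith [Real.exp_pos a, sub_nonneg.2 hab]

/-! ### Main estimate -/

theorem main (hd : 1 ≤ d) (A C : Matrix (Fin d) (Fin d) ℝ)
    (T : ℝ) (hT : 0 < T) (R : ℝ) (hR : 0 < R) :
    ∃ c₁ : ℝ, 0 < c₁ ∧ ∃ c₂ : ℝ, 0 < c₂ ∧
      ∀ x x₀ : EuclideanSpace ℝ (Fin d), ‖x‖ ≤ R → ‖x₀‖ ≤ R →
        ∀ h : ℝ → EuclideanSpace ℝ (Fin d),
          MeasureTheory.MemLp h 2 (MeasureTheory.volume.restrict (Set.Ioc 0 T)) →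
          |Real.exp (-(1/2) * Ffun A C T x + Gfun A C T x h)
              - Real.exp (-(1/2) * Ffun A C T x₀ + Gfun A C T x₀ h)|
            ≤ c₁ * (1 + (MeasureTheory.eLpNorm h 2
                  (MeasureTheory.volume.restrict (Set.Ioc 0 T))).toReal)
                * Real.exp (c₂ * (MeasureTheory.eLpNorm h 2
                    (MeasureTheory.volume.restrict (Set.Ioc 0 T))).toReal)
                * ‖x - x₀‖ := by
  set CT : ℝ :=
    ((MeasureTheory.volume.restrict (Set.Ioc (0:ℝ) T)) Set.univ ^ ((1:ℝ)/2)).toReal with hCTdef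
  have hCT : 0 ≤ CT := ENNReal.toReal_nonneg
  set CF : ℝ := Mu A C T * DK d A C T * Mu A C T * T * T with hCFdef
  have hCF : 0 ≤ CF := by
    have h1 := Mu_nonneg A C T
    have h2 := DK_nonneg A C hT.le
    rw [hCFdef]
    positivity
  set CG : ℝ := Mu A C T * CT with hCGdef
  have hCG : 0 ≤ CG := mul_nonneg (Mu_nonneg A C T) hCT
  refine ⟨Real.exp (CF * R * R / 2) * (CF * R + CG) + 1, by positivity,
    CG * R + 1, by positivity, ?_⟩
  intro x x₀ hx hx₀ h hm
  set N : ℝ := (MeasureTheory.eLpNorm h 2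
    (MeasureTheory.volume.restrict (Set.Ioc (0:ℝ) T))).toReal with hNdef
  have hN0 : 0 ≤ N := ENNReal.toReal_nonneg
  set D : ℝ := ‖x - x₀‖ with hDdef
  have hD0 : 0 ≤ D := norm_nonneg _
  -- bounds for F
  have hFb : ∀ y z : EuclideanSpace ℝ (Fin d), |Iphi A C T y z| ≤ CF * (‖y‖ * ‖z‖) :=
    fun y z => abs_Iphi_le hd A C hT.le y z
  have hFx : |Ffun A C T x| ≤ CF * (R * R) := by
    rw [Ffun_eq_Iphi]
    refine (hFb x x).trans ?_
    exact mul_le_mul_of_nonneg_left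
      (mul_le_mul hx hx (norm_nonneg _) hR.le) hCF
  have hFx₀ : |Ffun A C T x₀| ≤ CF * (R * R) := by
    rw [Ffun_eq_Iphi]
    refine (hFb x₀ x₀).trans ?_
    exact mul_le_mul_of_nonneg_left
      (mul_le_mul hx₀ hx₀ (norm_nonneg _) hR.le) hCF
  have hFdiff : |Ffun A C T x - Ffun A C T x₀| ≤ CF * (2 * R) * D := by
    rw [Ffun_sub_eq]
    refine (abs_add_le _ _).trans ?_
    have b1 : |Iphi A C T (x - x₀) x| ≤ CF * (D * R) := by
      refine (hFb (x - x₀) x).trans ?_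
      exact mul_le_mul_of_nonneg_left
        (mul_le_mul_of_nonneg_left hx hD0) hCF
    have b2 : |Iphi A C T x₀ (x - x₀)| ≤ CF * (R * D) := by
      refine (hFb x₀ (x - x₀)).trans ?_
      exact mul_le_mul_of_nonneg_left
        (mul_le_mul_of_nonneg_right hx₀ hD0) hCF
    nlinarith [b1, b2]
  -- bounds for G
  have hGb : ∀ y : EuclideanSpace ℝ (Fin d),
      |Gfun A C T y h| ≤ Mu A C T * ‖y‖ * (CT * N) :=
    fun y => abs_Gfun_le hd A C hT y h hm
  have hGx : |Gfun A C T x h| ≤ CG * R * N := by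
    refine (hGb x).trans ?_
    have : Mu A C T * ‖x‖ * (CT * N) ≤ Mu A C T * R * (CT * N) := by
      refine mul_le_mul_of_nonneg_right ?_ (mul_nonneg hCT hN0)
      exact mul_le_mul_of_nonneg_left hx (Mu_nonneg A C T)
    refine this.trans (le_of_eq ?_)
    rw [hCGdef]
    ring
  have hGx₀ : |Gfun A C T x₀ h| ≤ CG * R * N := by
    refine (hGb x₀).trans ?_
    have : Mu A C T * ‖x₀‖ * (CT * N) ≤ Mu A C T * R * (CT * N) := by
      refine mul_le_mul_of_nonneg_right ?_ (mul_nonneg hCT hN0)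
      exact mul_le_mul_of_nonneg_left hx₀ (Mu_nonneg A C T)
    refine this.trans (le_of_eq ?_)
    rw [hCGdef]
    ring
  have hGdiff : |Gfun A C T x h - Gfun A C T x₀ h| ≤ CG * N * D := by
    rw [Gfun_sub_eq hd A C hT x x₀ h hm]
    refine (hGb (x - x₀)).trans (le_of_eq ?_)
    rw [hCGdef]
    ring
  -- exponent bounds
  set a : ℝ := -(1/2) * Ffun A C T x + Gfun A C T x h with hadef
  set b : ℝ := -(1/2) * Ffun A C T x₀ + Gfun A C T x₀ h with hbdef
  set m : ℝ := CF * R * R / 2 + CG * R * N with hmdef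
  have ham : a ≤ m := by
    have h1 := (abs_le.1 hFx).1
    have h2 := (le_abs_self (Gfun A C T x h)).trans hGx
    rw [hadef, hmdef]
    linarith
  have hbm : b ≤ m := by
    have h1 := (abs_le.1 hFx₀).1
    have h2 := (le_abs_self (Gfun A C T x₀ h)).trans hGx₀
    rw [hbdef, hmdef]
    linarith
  have hab : |a - b| ≤ (CF * R + CG * N) * D := by
    have heq : a - b = -(1/2) * (Ffun A C T x - Ffun A C T x₀)
        + (Gfun A C T x h - Gfun A C T x₀ h) := by
      rw [hadef, hbdef]; ring
    rw [heq]
    refine (abs_add_le _ _).trans ?_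
    rw [abs_mul]
    have habs : |(-(1/2) : ℝ)| = 1/2 := by norm_num
    rw [habs]
    nlinarith [hFdiff, hGdiff, abs_nonneg (Ffun A C T x - Ffun A C T x₀),
      abs_nonneg (Gfun A C T x h - Gfun A C T x₀ h)]
  -- assembling
  have hkey := exp_diff ham hbm
  refine hkey.trans ?_
  have hstep : Real.exp m * |a - b| ≤ Real.exp m * ((CF * R + CG * N) * D) :=
    mul_le_mul_of_nonneg_left hab (Real.exp_pos m).le
  refine hstep.trans ?_
  have hexpm : Real.exp m = Real.exp (CF * R * R / 2) * Real.exp ((CG * R) * N) := by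
    rw [hmdef, Real.exp_add]
  have t2 : Real.exp ((CG * R) * N) ≤ Real.exp ((CG * R + 1) * N) := by
    refine Real.exp_le_exp.2 ?_
    nlinarith
  have t1 : Real.exp (CF * R * R / 2) * (CF * R + CG * N)
      ≤ (Real.exp (CF * R * R / 2) * (CF * R + CG) + 1) * (1 + N) := by
    have s2 : CF * R + CG * N ≤ (CF * R + CG) * (1 + N) := by
      nlinarith [mul_nonneg (mul_nonneg hCF hR.le) hN0, hCG]
    calc Real.exp (CF * R * R / 2) * (CF * R + CG * N)
        ≤ Real.exp (CF * R * R / 2) * ((CF * R + CG) * (1 + N)) :=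
          mul_le_mul_of_nonneg_left s2 (Real.exp_pos _).le
      _ = (Real.exp (CF * R * R / 2) * (CF * R + CG)) * (1 + N) := by ring
      _ ≤ (Real.exp (CF * R * R / 2) * (CF * R + CG) + 1) * (1 + N) := by nlinarith
  have hq1 : 0 ≤ CF * R + CG * N := by positivity
  have hq2 : (0:ℝ) ≤ (Real.exp (CF * R * R / 2) * (CF * R + CG) + 1) * (1 + N) := by positivity
  calc Real.exp m * ((CF * R + CG * N) * D)
      = (Real.exp (CF * R * R / 2) * (CF * R + CG * N)) * Real.exp ((CG * R) * N) * D := by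
        rw [hexpm]; ring
    _ ≤ ((Real.exp (CF * R * R / 2) * (CF * R + CG) + 1) * (1 + N))
          * Real.exp ((CG * R + 1) * N) * D := by
        refine mul_le_mul_of_nonneg_right ?_ hD0
        exact mul_le_mul t1 t2 (Real.exp_pos _).le hq2
    _ = (Real.exp (CF * R * R / 2) * (CF * R + CG) + 1) * (1 + N)
          * Real.exp ((CG * R + 1) * N) * D := by ring

end CMAux

/-- Local Lipschitz estimate for the Cameron–Martin density
`exp(−½F(x) + G(x,h))` in `x`, uniformly over `h ∈ L²(0,T;ℝ^d)`. -/
theorem density_lipschitz (d : ℕ) (hd : 1 ≤ d) (A C : Matrix (Fin d) (Fin d) ℝ)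
    (hC : C.PosSemidef)
    (hQ : ∀ t : ℝ, 0 < t → IsUnit (covQ A C t))
    (T : ℝ) (hT : 0 < T) (R : ℝ) (hR : 0 < R) :
    ∃ c₁ : ℝ, 0 < c₁ ∧ ∃ c₂ : ℝ, 0 < c₂ ∧
      ∀ x x₀ : EuclideanSpace ℝ (Fin d), ‖x‖ ≤ R → ‖x₀‖ ≤ R →
        ∀ h : ℝ → EuclideanSpace ℝ (Fin d),
          MemLp h 2 (volume.restrict (Set.Ioc 0 T)) →
          |Real.exp (-(1/2) * Ffun A C T x + Gfun A C T x h)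
              - Real.exp (-(1/2) * Ffun A C T x₀ + Gfun A C T x₀ h)|
            ≤ c₁ * (1 + (eLpNorm h 2 (volume.restrict (Set.Ioc 0 T))).toReal)
                * Real.exp (c₂ * (eLpNorm h 2 (volume.restrict (Set.Ioc 0 T))).toReal)
                * ‖x - x₀‖ := by
  exact CMAux.main hd A C T hT R hR
end

section
/- Let α < β be reals and let S_n : [α,β] → ℝ (n ∈ ℕ) be concave functions converging pointwise on [α,β] to a function S. Then S is concave, and for every s ∈ (α,β) at which S is differentiable, the right derivatives satisfy D⁺S_n(s) → S'(s) as n → ∞ (the right derivative D⁺S_n(s) exists for every n since S_n is concave). -/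
open Filter Set

/-- A concave function on `[a,b]` has a right derivative at each interior point,
equal to the supremum of the slopes to the right. -/
lemma concave_aux_hasDerivWithinAt {f : ℝ → ℝ} {a b s : ℝ}
    (hf : ConcaveOn ℝ (Set.Icc a b) f) (hs : s ∈ Set.Ioo a b) :
    HasDerivWithinAt f (sSup (slope f s '' Set.Ioo s b)) (Set.Ici s) s := by
  have hsI : s ∈ Set.Icc a b := ⟨hs.1.le, hs.2.le⟩
  have haI : a ∈ Set.Icc a b := ⟨le_rfl, (hs.1.trans hs.2).le⟩
  have h_nonempty : (Set.Ioo s b).Nonempty := nonempty_Ioo.2 hs.2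
  have Af : AntitoneOn (slope f s) (Set.Ioo s b) := by
    refine (hf.slope_anti hsI).mono ?_
    intro y hy
    exact ⟨⟨(hs.1.trans hy.1).le, hy.2.le⟩, ne_of_gt hy.1⟩
  have h_bdd : BddAbove (slope f s '' Set.Ioo s b) := by
    refine ⟨slope f a s, ?_⟩
    rintro _ ⟨y, hy, rfl⟩
    have := hf.slope_anti_adjacent haI (y := s) (z := y)
      ⟨(hs.1.trans hy.1).le, hy.2.le⟩ hs.1 hy.1
    simpa [slope_def_field] using this
  have htend := Af.tendsto_nhdsWithin_Ioo_right h_nonempty h_bdd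
  rw [hasDerivWithinAt_iff_tendsto_slope, Set.Ici_sdiff_left]
  exact htend

/-- A pointwise limit of concave functions on `[α,β]` is concave, and at every interior point
where the limit is differentiable, the right derivatives of the approximants converge to the
derivative of the limit. -/
theorem concave_pointwise_limit_right_deriv (α β : ℝ) (hab : α < β)
    (S : ℕ → ℝ → ℝ) (Slim : ℝ → ℝ)
    (hconc : ∀ n, ConcaveOn ℝ (Set.Icc α β) (S n))
    (hlim : ∀ s ∈ Set.Icc α β, Tendsto (fun n => S n s) atTop (nhds (Slim s))) :
    ConcaveOn ℝ (Set.Icc α β) Slim ∧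
    ∀ s ∈ Set.Ioo α β,
      (∀ n, DifferentiableWithinAt ℝ (S n) (Set.Ici s) s) ∧
      (DifferentiableAt ℝ Slim s →
        Tendsto (fun n => derivWithin (S n) (Set.Ici s) s) atTop (nhds (deriv Slim s))) := by
  constructor
  · refine ⟨convex_Icc α β, ?_⟩
    intro x hx y hy a b ha hb hab'
    have hmem : a • x + b • y ∈ Set.Icc α β := (convex_Icc α β) hx hy ha hb hab'
    refine le_of_tendsto_of_tendsto'
      (((hlim x hx).const_smul a).add ((hlim y hy).const_smul b))
      (hlim _ hmem) (fun n => (hconc n).2 hx hy ha hb hab')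
  · intro s hs
    have hsI : s ∈ Set.Icc α β := ⟨hs.1.le, hs.2.le⟩
    have hder : ∀ n, HasDerivWithinAt (S n) (sSup (slope (S n) s '' Set.Ioo s β))
        (Set.Ici s) s := fun n => concave_aux_hasDerivWithinAt (hconc n) hs
    have hdiff : ∀ n, DifferentiableWithinAt ℝ (S n) (Set.Ici s) s :=
      fun n => (hder n).differentiableWithinAt
    refine ⟨hdiff, fun hSlim => ?_⟩
    have hderEq : ∀ n, derivWithin (S n) (Set.Ici s) s
        = sSup (slope (S n) s '' Set.Ioo s β) := fun n =>
      (hder n).derivWithin (uniqueDiffOn_Ici s s Set.self_mem_Ici)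
    -- lower bound: slopes to the right are ≤ right derivative
    have hlb : ∀ n, ∀ y ∈ Set.Ioo s β, slope (S n) s y ≤ derivWithin (S n) (Set.Ici s) s := by
      intro n y hy
      exact (hconc n).slope_le_of_hasDerivWithinAt_Ioi hsI ⟨(hs.1.trans hy.1).le, hy.2.le⟩
        hy.1 (hder n).Ioi_of_Ici |>.trans_eq (hderEq n).symm
    -- upper bound: right derivative ≤ slopes from the left
    have hub : ∀ n, ∀ x ∈ Set.Ioo α s, derivWithin (S n) (Set.Ici s) s ≤ slope (S n) x s := by
      intro n x hx
      rw [hderEq n]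
      refine csSup_le ((nonempty_Ioo.2 hs.2).image _) ?_
      rintro _ ⟨y, hy, rfl⟩
      have := (hconc n).slope_anti_adjacent ⟨hx.1.le, (hx.2.trans hs.2).le⟩
        ⟨(hs.1.trans hy.1).le, hy.2.le⟩ hx.2 hy.1
      simpa [slope_def_field] using this
    -- slope tendsto from differentiability
    have hslope : Tendsto (slope Slim s) (nhdsWithin s {s}ᶜ) (nhds (deriv Slim s)) :=
      hasDerivAt_iff_tendsto_slope.1 hSlim.hasDerivAt
    refine tendsto_order.2 ⟨fun c hc => ?_, fun c hc => ?_⟩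
    · -- find y ∈ Ioo s β with c < slope Slim s y
      have h1 : ∀ᶠ y in nhdsWithin s (Set.Ioi s), c < slope Slim s y := by
        have : Tendsto (slope Slim s) (nhdsWithin s (Set.Ioi s)) (nhds (deriv Slim s)) :=
          hslope.mono_left (nhdsWithin_mono s (fun y hy => ne_of_gt hy))
        exact this.eventually (eventually_gt_nhds hc)
      have h2 : Set.Ioo s β ∈ nhdsWithin s (Set.Ioi s) := Ioo_mem_nhdsGT hs.2
      obtain ⟨y, hy1, hy2⟩ := (h1.and (eventually_of_mem h2 (fun y hy => hy))).exists
      have hyI : y ∈ Set.Icc α β := ⟨(hs.1.trans hy2.1).le, hy2.2.le⟩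
      have htend : Tendsto (fun n => slope (S n) s y) atTop (nhds (slope Slim s y)) := by
        simp only [slope_def_field]
        exact (((hlim y hyI).sub (hlim s hsI)).div_const _)
      filter_upwards [htend.eventually (eventually_gt_nhds hy1)] with n hn
      exact hn.trans_le (hlb n y hy2)
    · -- find x ∈ Ioo α s with slope Slim x s < c
      have h1 : ∀ᶠ x in nhdsWithin s (Set.Iio s), slope Slim s x < c := by
        have : Tendsto (slope Slim s) (nhdsWithin s (Set.Iio s)) (nhds (deriv Slim s)) :=
          hslope.mono_left (nhdsWithin_mono s (fun y hy => ne_of_lt hy))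
        exact this.eventually (eventually_lt_nhds hc)
      have h2 : Set.Ioo α s ∈ nhdsWithin s (Set.Iio s) := Ioo_mem_nhdsLT hs.1
      obtain ⟨x, hx1, hx2⟩ := (h1.and (eventually_of_mem h2 (fun y hy => hy))).exists
      have hxI : x ∈ Set.Icc α β := ⟨hx2.1.le, (hx2.2.trans hs.2).le⟩
      have htend : Tendsto (fun n => slope (S n) x s) atTop (nhds (slope Slim x s)) := by
        simp only [slope_def_field]
        exact (((hlim s hsI).sub (hlim x hxI)).div_const _)
      rw [slope_comm] at hx1
      filter_upwards [htend.eventually (eventually_lt_nhds hx1)] with n hn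
      exact (hub n x hx2).trans_lt hn
end
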